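/- arXiv:2104.03260 — 7 statements merged into one kernel-verified Lean document; each statement's English description precedes it below -/
import Mathlib

section
/- Let k be a positive integer, 1 ≤ r ≤ 2+2√(k·ln k), and n = 2k+r. Let A be a family of (k+r−1)-element subsets of [n−1], and let N(A) be the family of all (k−1)-element subsets of [n−1] contained in some member of A. If |A| ≤ \binom{n-2-c}{k+r-1} for some positive integer c, then |N(A)| ≥ |A| · ∏_{j=0}^{r-1} (1 + c/(k−c+j)), i.e., |N(A)| ≥ |A|·(1 + c/(k+r−c−1))·(1 + c/(k+r−c−2))·…·(1 + c/(k−c)). -/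
/-!
By Kruskal–Katona, the `r`-fold shadow `N(A) = ∂^r A` is at least as large as that of the colex
initial segment `𝒞` with `|𝒞| = |A|`, and since `|A| ≤ C(n-2-c, k+r-1)` every member of `𝒞` lies
in the first `m = n-2-c` points. Inside an `m`-point ground set, double counting (local LYM) gives
`|∂ℬ| ≥ |ℬ| · t/(m-t+1)` for a family `ℬ` of `t`-sets; iterating from `t = k+r-1` down `r` times
yields the factor `∏_{p<r} (k+r-1-p)/(k-c+p) = ∏_{j<r} (1 + c/(k-c+j))`.
-/

open Finset
open scoped FinsetFamily

namespace Finset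

namespace Colex

variable {α : Type*} [LinearOrder α]

lemma isInitSeg_powersetCard_Iio [LocallyFiniteOrderBot α] (b : α) (r : ℕ) :
    IsInitSeg (powersetCard r (Iio b)) r := by
  refine ⟨Set.sized_powersetCard _ _, fun s t hs ⟨hts, ht⟩ ↦ mem_powersetCard.2 ⟨?_, ht⟩⟩
  have hsb : ∀ a ∈ s, a < b := fun a ha ↦ mem_Iio.1 ((mem_powersetCard.1 hs).1 ha)
  exact fun a ha ↦ mem_Iio.2 (forall_lt_mono hts.le hsb a ha)

variable [Fintype α] {𝒟 : Finset (Finset α)} {r N : ℕ}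

lemma isInitSeg_initSeg_erase (s : Finset α) : IsInitSeg ((initSeg s).erase s) #s := by
  refine ⟨isInitSeg_initSeg.1.mono (erase_subset _ _), fun u t hu ⟨htu, ht⟩ ↦ ?_⟩
  have hus := (mem_initSeg.1 (mem_of_mem_erase hu)).2
  exact mem_erase.2 ⟨fun hts ↦ (htu.trans_le hus).ne (congrArg toColex hts),
    mem_initSeg.2 ⟨ht.symm, htu.le.trans hus⟩⟩

lemma IsInitSeg.exists_subset_card_eq (h𝒟 : IsInitSeg 𝒟 r) (hN : N ≤ #𝒟) :
    ∃ 𝒞 ⊆ 𝒟, #𝒞 = N ∧ IsInitSeg 𝒞 r := by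
  induction 𝒟 using Finset.strongInduction with
  | H 𝒟 ih =>
    obtain hN | hN := hN.eq_or_lt
    · exact ⟨𝒟, Subset.rfl, hN.symm, h𝒟⟩
    obtain ⟨s, rfl, rfl⟩ := h𝒟.exists_initSeg (card_pos.1 (N.zero_le.trans_lt hN))
    have hs : s ∈ initSeg s := mem_initSeg_self
    obtain ⟨𝒞, h𝒞, h⟩ := ih _ (erase_ssubset hs) (isInitSeg_initSeg_erase s)
      (by rw [card_erase_of_mem hs]; omega)
    exact ⟨𝒞, h𝒞.trans (erase_subset _ _), h⟩

end Colex

section LocalLYM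

variable {𝕜 α : Type*} [Field 𝕜] [LinearOrder 𝕜] [IsStrictOrderedRing 𝕜] [DecidableEq α]
  {𝒜 : Finset (Finset α)} {M : Finset α} {r : ℕ}

lemma card_mul_le_card_shadow_mul_of_forall_subset (h𝒜 : (𝒜 : Set (Finset α)).Sized r)
    (hM : ∀ s ∈ 𝒜, s ⊆ M) : #𝒜 * r ≤ #(∂ 𝒜) * (#M - r + 1) := by
  refine card_mul_le_card_mul' (· ⊆ ·) (fun s hs ↦ ?_) (fun t ht ↦ ?_)
  · rw [← h𝒜 hs, ← card_image_of_injOn s.erase_injOn]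
    refine card_le_card ?_
    simp_rw [image_subset_iff, mem_bipartiteBelow]
    exact fun a ha ↦ ⟨erase_mem_shadow hs ha, erase_subset _ _⟩
  · obtain ⟨s₀, hs₀, hts₀, hcard⟩ := mem_shadow_iff_exists_mem_card_add_one.1 ht
    have htM : t ⊆ M := hts₀.trans (hM s₀ hs₀)
    have ht_card : #t + 1 = r := hcard ▸ h𝒜 hs₀
    calc #(bipartiteAbove (· ⊆ ·) 𝒜 t)
        ≤ #((M \ t).image (insert · t)) := card_le_card fun s hs ↦ by
          obtain ⟨hs𝒜, hts⟩ := (mem_bipartiteAbove _).1 hs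
          obtain ⟨a, ha, rfl⟩ := exists_eq_insert_iff.2 ⟨hts, by rw [h𝒜 hs𝒜, ht_card]⟩
          exact mem_image_of_mem _ (mem_sdiff.2 ⟨hM _ hs𝒜 (mem_insert_self a t), ha⟩)
      _ ≤ #(M \ t) := card_image_le
      _ = #M - (r - 1) := by rw [card_sdiff_of_subset htM, ← ht_card, Nat.add_sub_cancel]
      _ ≤ #M - r + 1 := tsub_tsub_le_tsub_add

lemma card_mul_div_le_card_shadow (h𝒜 : (𝒜 : Set (Finset α)).Sized r)
    (hM : ∀ s ∈ 𝒜, s ⊆ M) : (#𝒜 : 𝕜) * (r / (#M - r + 1)) ≤ #(∂ 𝒜) := by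
  obtain rfl | ⟨s, hs⟩ := 𝒜.eq_empty_or_nonempty
  · simp
  have hrM : r ≤ #M := h𝒜 hs ▸ card_le_card (hM s hs)
  have hpos : (0 : 𝕜) < #M - r + 1 := by
    have : (r : 𝕜) ≤ #M := by exact_mod_cast hrM
    linarith
  rw [← mul_div_assoc, div_le_iff₀ hpos]
  have := (Nat.cast_le (α := 𝕜)).2 (card_mul_le_card_shadow_mul_of_forall_subset h𝒜 hM)
  push_cast [hrM] at this
  exact this

lemma card_mul_prod_le_card_shadow_iterate (h𝒜 : (𝒜 : Set (Finset α)).Sized r)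
    (hM : ∀ s ∈ 𝒜, s ⊆ M) {i : ℕ} (hi : i ≤ r) :
    (#𝒜 : 𝕜) * ∏ p ∈ range i, ((r : 𝕜) - p) / (#M - r + p + 1) ≤ #(∂^[i] 𝒜) := by
  induction i generalizing 𝒜 r with
  | zero => simp
  | succ i ih =>
    obtain rfl | ⟨s, hs⟩ := 𝒜.eq_empty_or_nonempty
    · simp
    obtain ⟨r, rfl⟩ : ∃ r', r = r' + 1 := ⟨r - 1, by omega⟩
    have hrM : r + 1 ≤ #M := h𝒜 hs ▸ card_le_card (hM s hs)
    have hshadowM : ∀ t ∈ ∂ 𝒜, t ⊆ M := fun t ht ↦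
      have ⟨s, hs, hts⟩ := exists_subset_of_mem_shadow ht
      hts.trans (hM s hs)
    set Q := ∏ p ∈ range i, ((r : 𝕜) - p) / (#M - r + p + 1)
    have hQ : 0 ≤ Q := prod_nonneg fun p hp ↦ by
      have hp : (p : 𝕜) + 1 ≤ r := by exact_mod_cast (mem_range.1 hp).trans_le (by omega)
      have hrM : (r : 𝕜) + 1 ≤ #M := by exact_mod_cast hrM
      exact div_nonneg (by linarith) (by linarith [(p.cast_nonneg : (0 : 𝕜) ≤ p)])
    calc (#𝒜 : 𝕜) * ∏ p ∈ range (i + 1), (((r + 1 : ℕ) : 𝕜) - p) / (#M - (r + 1 : ℕ) + p + 1)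
        = #𝒜 * ((r + 1 : ℕ) / (#M - (r + 1 : ℕ) + 1)) * Q := by
          rw [prod_range_succ', mul_assoc, mul_comm (∏ p ∈ range i, _)]
          congr 2
          · simp
          · refine prod_congr rfl fun p _ ↦ ?_
            push_cast
            ring_nf
      _ ≤ #(∂ 𝒜) * Q := mul_le_mul_of_nonneg_right (card_mul_div_le_card_shadow h𝒜 hM) hQ
      _ ≤ #(∂^[i] (∂ 𝒜)) := ih h𝒜.shadow hshadowM (by omega)

end LocalLYM

lemma shadow_iterate_eq_biUnion_powersetCard {α : Type*} [DecidableEq α] {𝒜 : Finset (Finset α)}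
    {s i : ℕ} (h𝒜 : (𝒜 : Set (Finset α)).Sized s) (hi : i ≤ s) :
    ∂^[i] 𝒜 = 𝒜.biUnion (powersetCard (s - i)) := by
  ext t
  simp only [mem_shadow_iterate_iff_exists_sdiff, mem_biUnion, mem_powersetCard]
  refine exists_congr fun u ↦ and_congr_right fun hu ↦ and_congr_right fun htu ↦ ?_
  have := card_le_card htu
  rw [card_sdiff_of_subset htu, h𝒜 hu] at *
  omega

lemma prod_range_div_reflect {𝕜 : Type*} [Field 𝕜] (x d : 𝕜) (r : ℕ) :
    ∏ p ∈ range r, (x + r - 1 - p) / (d + p) = ∏ j ∈ range r, (x + j) / (d + j) := by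
  rw [prod_div_distrib, prod_div_distrib, ← prod_range_reflect (x + ·) r]
  congr 1
  refine prod_congr rfl fun p hp ↦ ?_
  have hp := mem_range.1 hp
  rw [Nat.sub_sub, Nat.cast_sub (by omega)]
  push_cast
  ring

lemma prod_one_add_div_eq_prod_reflect {𝕜 : Type*} [Field 𝕜] [LinearOrder 𝕜]
    [IsStrictOrderedRing 𝕜] {k c : 𝕜} (hck : c < k) (r : ℕ) :
    ∏ j ∈ range r, (1 + c / (k - c + j)) = ∏ p ∈ range r, (k + r - 1 - p) / (k - c + p) := by
  rw [prod_range_div_reflect]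
  refine prod_congr rfl fun j _ ↦ ?_
  have : k - c + j ≠ 0 := by positivity [sub_pos.2 hck]
  field_simp
  ring

end Finset

theorem isoperimetry_shadow_i_general (k r n c : ℕ) (hk : 1 ≤ k) (hr : 1 ≤ r) (hn : n = 2 * k + r)
    (A : Finset (Finset (Fin (n - 1)))) (hA : ∀ S ∈ A, S.card = k + r - 1)
    (hcard : A.card ≤ (n - 2 - c).choose (k + r - 1)) :
    (A.card : ℝ) * ∏ j ∈ Finset.range r, (1 + (c : ℝ) / ((k : ℝ) - c + j)) ≤
      ((A.biUnion fun S => Finset.powersetCard (k - 1) S).card : ℝ) := by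
  obtain rfl | hA₀ := A.eq_empty_or_nonempty
  · simp
  have hsm : k + r - 1 ≤ n - 2 - c := by
    by_contra h
    rw [Nat.choose_eq_zero_of_lt (not_le.1 h)] at hcard
    exact hA₀.card_pos.ne' (Nat.le_zero.1 hcard)
  have hck : c < k := by omega
  set M : Finset (Fin (n - 1)) := Iio ⟨n - 2 - c, by omega⟩
  have hM : #M = n - 2 - c := Fin.card_Iio _
  obtain ⟨𝒞, h𝒞M, h𝒞card, h𝒞⟩ :=
    (Colex.isInitSeg_powersetCard_Iio _ (k + r - 1)).exists_subset_card_eq (N := #A)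
      (by rwa [card_powersetCard, hM])
  have hfactor (p : ℕ) : (k + r - 1 - p : ℝ) / (k - c + p) =
      (((k + r - 1 : ℕ) : ℝ) - p) / (#M - (k + r - 1 : ℕ) + p + 1) := by
    rw [hM, hn, Nat.sub_sub, Nat.cast_sub (by omega), Nat.cast_sub (by omega)]
    push_cast
    ring
  have hk_sub : k - 1 = k + r - 1 - r := by omega
  rw [prod_one_add_div_eq_prod_reflect (by exact_mod_cast hck), ← h𝒞card, hk_sub,
    ← shadow_iterate_eq_biUnion_powersetCard (fun S hS ↦ hA S hS) (by omega)]
  simp_rw [hfactor]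
  calc _ ≤ (#(∂^[r] 𝒞) : ℝ) := card_mul_prod_le_card_shadow_iterate h𝒞.1
        (fun S hS ↦ (mem_powersetCard.1 (h𝒞M hS)).1) (by omega)
    _ ≤ #(∂^[r] A) := by exact_mod_cast iterated_kk (fun S hS ↦ hA S hS) h𝒞card.le h𝒞

/-- Isoperimetry (i). For 1 ≤ r ≤ 2+2√(k ln k), n = 2k+r, a family A of
(k+r-1)-subsets of [n-1] with |A| ≤ C(n-2-c, k+r-1) satisfies
|N(A)| ≥ |A| · ∏_{j=0}^{r-1} (1 + c/(k-c+j)), where N(A) is the (k-1)-shadow of A. -/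
theorem isoperimetry_shadow_i (k r n c : ℕ) (hk : 1 ≤ k) (hr : 1 ≤ r)
    (hrub : (r : ℝ) ≤ 2 + 2 * Real.sqrt (k * Real.log k)) (hn : n = 2 * k + r)
    (hc : 0 < c)
    (A : Finset (Finset (Fin (n - 1)))) (hA : ∀ S ∈ A, S.card = k + r - 1)
    (hcard : A.card ≤ (n - 2 - c).choose (k + r - 1)) :
    (A.card : ℝ) * ∏ j ∈ Finset.range r, (1 + (c : ℝ) / ((k : ℝ) - c + j)) ≤
      ((A.biUnion fun S => Finset.powersetCard (k - 1) S).card : ℝ) :=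
  isoperimetry_shadow_i_general k r n c hk hr hn A hA hcard
end

section
/- Let Σ be a (q,s)-biregular bipartite graph with bipartition X ∪ Y, and let 1 ≤ ψ ≤ min{q,s}−1. Let A ⊆ X be a 2-linked set with |[A]| = a and |N(A)| = g. If (S,F) is a ψ-approximation for A, then |S| ≤ (s/q)|F| + (ψ(gs−aq)/q)·( 1/(q−ψ) + 1/(s−ψ) ). -/
open Finset

/-- `distLE G m u v` : there is a walk of length at most `m` from `u` to `v`. -/
def distLE {V : Type} (G : SimpleGraph V) (m : ℕ) (u v : V) : Prop :=
  ∃ p : G.Walk u v, p.length ≤ m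

/-- `MLinked G m A` : the set `A` is `m`-linked. -/
def MLinked {V : Type} (G : SimpleGraph V) (m : ℕ) (A : Finset V) : Prop :=
  ∀ u ∈ A, ∀ v ∈ A,
    Relation.ReflTransGen (fun a b => a ∈ A ∧ b ∈ A ∧ distLE G m a b) u v

/-- The neighborhood `N(A)` of a set of vertices. -/
def nbhd {V : Type} [Fintype V] [DecidableEq V] (G : SimpleGraph V)
    [DecidableRel G.Adj] (A : Finset V) : Finset V :=
  A.biUnion fun v => G.neighborFinset v

/-- The closure `[A] = {v ∈ X : N(v) ⊆ N(A)}` of `A ⊆ X`. -/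
def closureOf {V : Type} [Fintype V] [DecidableEq V] (G : SimpleGraph V)
    [DecidableRel G.Adj] (X A : Finset V) : Finset V :=
  X.filter fun v => G.neighborFinset v ⊆ nbhd G A

lemma sum_inter_comm {V : Type} [Fintype V] [DecidableEq V] (G : SimpleGraph V)
    [DecidableRel G.Adj] (P Q : Finset V) :
    ∑ u ∈ P, (G.neighborFinset u ∩ Q).card = ∑ v ∈ Q, (G.neighborFinset v ∩ P).card := by
  have h : ∀ (R : Finset V) (u : V),
      (G.neighborFinset u ∩ R).card = ∑ v ∈ R, if G.Adj u v then 1 else 0 := by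
    intro R u
    rw [← Finset.card_filter]
    congr 1
    ext v
    simp [SimpleGraph.mem_neighborFinset, and_comm]
  simp only [h]
  rw [Finset.sum_comm]
  refine Finset.sum_congr rfl fun u _ => Finset.sum_congr rfl fun v _ => ?_
  simp only [G.adj_comm]

/-- If (S,F) is a ψ-approximation for a 2-linked set A ⊆ X with
|[A]| = a and |N(A)| = g in a (q,s)-biregular bipartite graph, then
|S| ≤ (s/q)|F| + (ψ(gs-aq)/q)(1/(q-ψ) + 1/(s-ψ)). -/
theorem psi_approximation_size_bound {V : Type} [Fintype V] [DecidableEq V]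
    (G : SimpleGraph V) [DecidableRel G.Adj] (X Y : Finset V) (q s : ℕ)
    (hdisj : Disjoint X Y) (hunion : X ∪ Y = Finset.univ)
    (hbip : ∀ u v : V, G.Adj u v → (u ∈ X ∧ v ∈ Y) ∨ (u ∈ Y ∧ v ∈ X))
    (hdegX : ∀ x ∈ X, G.degree x = q) (hdegY : ∀ y ∈ Y, G.degree y = s)
    (ψ : ℕ) (hψ1 : 1 ≤ ψ) (hψ2 : ψ ≤ min q s - 1)
    (A : Finset V) (hAX : A ⊆ X) (hA2 : MLinked G 2 A)
    (a g : ℕ) (ha : (closureOf G X A).card = a) (hg : (nbhd G A).card = g)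
    (S F : Finset V)
    (hFN : F ⊆ nbhd G A) (hSA : closureOf G X A ⊆ S)
    (hSdeg : ∀ u ∈ S, q - ψ ≤ (G.neighborFinset u ∩ F).card)
    (hYdeg : ∀ v ∈ Y \ F, s - ψ ≤ (G.neighborFinset v ∩ (X \ S)).card) :
    (S.card : ℝ) ≤ ((s : ℝ) / q) * F.card +
      (ψ : ℝ) * ((g : ℝ) * s - (a : ℝ) * q) / q *
        (1 / ((q : ℝ) - ψ) + 1 / ((s : ℝ) - ψ)) := by
  -- basic numeric facts
  have hmq : min q s ≤ q := min_le_left q s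
  have hms : min q s ≤ s := min_le_right q s
  have hq : ψ < q := by omega
  have hs : ψ < s := by omega
  -- membership helpers
  have hmem : ∀ u v : V, v ∈ G.neighborFinset u ↔ G.Adj u v := fun u v =>
    SimpleGraph.mem_neighborFinset G u v
  have hXY : ∀ u v : V, G.Adj u v → u ∈ X → v ∈ Y := by
    intro u v h hu
    rcases hbip u v h with ⟨_, hv⟩ | ⟨hu', _⟩
    · exact hv
    · exact absurd hu' (Finset.disjoint_left.mp hdisj hu)
  have hYX : ∀ u v : V, G.Adj u v → u ∈ Y → v ∈ X := by
    intro u v h hu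
    rcases hbip u v h with ⟨hu', _⟩ | ⟨_, hv⟩
    · exact absurd hu (Finset.disjoint_left.mp hdisj hu')
    · exact hv
  set NA := nbhd G A with hNA
  set B := closureOf G X A with hB
  have hBX : B ⊆ X := Finset.filter_subset _ _
  have hBclose : ∀ u ∈ B, G.neighborFinset u ⊆ NA := by
    intro u hu; exact (Finset.mem_filter.mp hu).2
  have hNAY : NA ⊆ Y := by
    intro v hv
    rcases Finset.mem_biUnion.mp hv with ⟨u, hu, hv'⟩
    exact hXY u v ((hmem u v).mp hv') (hAX hu)
  have hnX : ∀ u ∈ X, G.neighborFinset u ⊆ Y := by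
    intro u hu v hv; exact hXY u v ((hmem u v).mp hv) hu
  have hnY : ∀ v ∈ Y, G.neighborFinset v ⊆ X := by
    intro u hu v hv; exact hYX u v ((hmem u v).mp hv) hu
  have hcardX : ∀ u ∈ X, (G.neighborFinset u).card = q := by
    intro u hu; rw [SimpleGraph.card_neighborFinset_eq_degree]; exact hdegX u hu
  have hcardY : ∀ v ∈ Y, (G.neighborFinset v).card = s := by
    intro v hv; rw [SimpleGraph.card_neighborFinset_eq_degree]; exact hdegY v hv
  -- S ⊆ X
  have hSX : S ⊆ X := by
    intro u hu
    have h1 := hSdeg u hu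
    have h2 : 0 < (G.neighborFinset u ∩ F).card := by omega
    rcases Finset.card_pos.mp h2 with ⟨v, hv⟩
    rcases Finset.mem_inter.mp hv with ⟨hv1, hv2⟩
    exact hYX v u ((hmem u v).mp hv1).symm (hNAY (hFN hv2))
  set T := S \ B with hT
  set W := NA \ F with hW
  set D := ∑ u ∈ X \ B, (G.neighborFinset u ∩ NA).card with hD
  -- Fact 1 : a*q + D = g*s
  have fact1 : a * q + D = g * s := by
    have hsplit : ∑ u ∈ X, (G.neighborFinset u ∩ NA).card
        = ∑ u ∈ B, (G.neighborFinset u ∩ NA).card + D := by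
      rw [hD, ← Finset.sum_union Finset.disjoint_sdiff, Finset.union_sdiff_of_subset hBX]
    have hBq : ∑ u ∈ B, (G.neighborFinset u ∩ NA).card = a * q := by
      rw [Finset.sum_congr rfl fun u hu => ?_]
      · rw [Finset.sum_const, smul_eq_mul, ha]
      · rw [Finset.inter_eq_left.mpr (hBclose u hu)]
        exact hcardX u (hBX hu)
    have hgs : ∑ u ∈ X, (G.neighborFinset u ∩ NA).card = g * s := by
      rw [sum_inter_comm]
      rw [Finset.sum_congr rfl fun v hv => ?_]
      · rw [Finset.sum_const, smul_eq_mul, hg]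
      · rw [Finset.inter_eq_left.mpr (hnY v (hNAY hv))]
        exact hcardY v (hNAY hv)
    omega
  -- Fact 2 : (q-ψ) * T.card ≤ D
  have hTsub : T ⊆ X \ B := Finset.sdiff_subset_sdiff hSX (le_refl _)
  have fact2 : (q - ψ) * T.card ≤ D := by
    calc (q - ψ) * T.card = ∑ _u ∈ T, (q - ψ) := by
          rw [Finset.sum_const, smul_eq_mul, mul_comm]
      _ ≤ ∑ u ∈ T, (G.neighborFinset u ∩ F).card :=
          Finset.sum_le_sum fun u hu => hSdeg u (Finset.mem_sdiff.mp hu).1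
      _ ≤ ∑ u ∈ T, (G.neighborFinset u ∩ NA).card :=
          Finset.sum_le_sum fun u _ =>
            Finset.card_le_card (Finset.inter_subset_inter_left hFN)
      _ ≤ D := Finset.sum_le_sum_of_subset hTsub
  -- Fact 3 : (s-ψ) * W.card ≤ D
  have fact3 : (s - ψ) * W.card ≤ D := by
    have hXSsub : X \ S ⊆ X \ B := Finset.sdiff_subset_sdiff (le_refl _) hSA
    calc (s - ψ) * W.card = ∑ _v ∈ W, (s - ψ) := by
          rw [Finset.sum_const, smul_eq_mul, mul_comm]
      _ ≤ ∑ v ∈ W, (G.neighborFinset v ∩ (X \ B)).card := by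
          refine Finset.sum_le_sum fun v hv => ?_
          rcases Finset.mem_sdiff.mp hv with ⟨hv1, hv2⟩
          calc s - ψ ≤ (G.neighborFinset v ∩ (X \ S)).card :=
                hYdeg v (Finset.mem_sdiff.mpr ⟨hNAY hv1, hv2⟩)
            _ ≤ _ := Finset.card_le_card (Finset.inter_subset_inter_left hXSsub)
      _ ≤ ∑ v ∈ NA, (G.neighborFinset v ∩ (X \ B)).card :=
          Finset.sum_le_sum_of_subset (Finset.sdiff_subset)
      _ = D := by rw [hD, sum_inter_comm]
  -- Fact 4 : q * S.card ≤ s * F.card + ψ * W.card + ψ * T.card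
  have fact4 : q * S.card ≤ s * F.card + ψ * W.card + ψ * T.card := by
    have hdecomp : ∀ u ∈ S, (G.neighborFinset u).card
        = (G.neighborFinset u ∩ F).card + (G.neighborFinset u ∩ W).card
          + (G.neighborFinset u ∩ (Y \ NA)).card := by
      intro u hu
      have hNu : G.neighborFinset u ⊆ Y := hnX u (hSX hu)
      have h1 : G.neighborFinset u = (G.neighborFinset u ∩ NA) ∪ (G.neighborFinset u ∩ (Y \ NA)) := by
        rw [← Finset.inter_union_distrib_left, Finset.union_sdiff_of_subset hNAY,
          Finset.inter_eq_left.mpr hNu]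
      have h2 : G.neighborFinset u ∩ NA = (G.neighborFinset u ∩ F) ∪ (G.neighborFinset u ∩ W) := by
        rw [← Finset.inter_union_distrib_left, Finset.union_sdiff_of_subset hFN]
      have hd1 : Disjoint (G.neighborFinset u ∩ NA) (G.neighborFinset u ∩ (Y \ NA)) :=
        Finset.disjoint_of_subset_left (Finset.inter_subset_right)
          (Finset.disjoint_of_subset_right (Finset.inter_subset_right) Finset.disjoint_sdiff)
      have hd2 : Disjoint (G.neighborFinset u ∩ F) (G.neighborFinset u ∩ W) :=
        Finset.disjoint_of_subset_left (Finset.inter_subset_right)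
          (Finset.disjoint_of_subset_right (Finset.inter_subset_right) Finset.disjoint_sdiff)
      conv_lhs => rw [h1]
      rw [Finset.card_union_of_disjoint hd1, h2, Finset.card_union_of_disjoint hd2]
    have hqS : q * S.card = ∑ u ∈ S, (G.neighborFinset u).card := by
      rw [Finset.sum_congr rfl fun u hu => hcardX u (hSX hu), Finset.sum_const,
        smul_eq_mul, mul_comm]
    have hsum : ∑ u ∈ S, (G.neighborFinset u).card
        = ∑ u ∈ S, (G.neighborFinset u ∩ F).card + ∑ u ∈ S, (G.neighborFinset u ∩ W).card
          + ∑ u ∈ S, (G.neighborFinset u ∩ (Y \ NA)).card := by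
      rw [← Finset.sum_add_distrib, ← Finset.sum_add_distrib]
      exact Finset.sum_congr rfl hdecomp
    have hF : ∑ u ∈ S, (G.neighborFinset u ∩ F).card ≤ s * F.card := by
      rw [sum_inter_comm]
      calc ∑ v ∈ F, (G.neighborFinset v ∩ S).card ≤ ∑ v ∈ F, s := by
            refine Finset.sum_le_sum fun v hv => ?_
            rw [← hcardY v (hNAY (hFN hv))]
            exact Finset.card_le_card (Finset.inter_subset_left)
        _ = s * F.card := by rw [Finset.sum_const, smul_eq_mul, mul_comm]
    have hWb : ∑ u ∈ S, (G.neighborFinset u ∩ W).card ≤ ψ * W.card := by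
      rw [sum_inter_comm]
      calc ∑ v ∈ W, (G.neighborFinset v ∩ S).card ≤ ∑ v ∈ W, ψ := by
            refine Finset.sum_le_sum fun v hv => ?_
            rcases Finset.mem_sdiff.mp hv with ⟨hv1, hv2⟩
            have hvY : v ∈ Y := hNAY hv1
            have hvdeg := hYdeg v (Finset.mem_sdiff.mpr ⟨hvY, hv2⟩)
            have hNv : G.neighborFinset v ⊆ X := hnY v hvY
            have hsplit : G.neighborFinset v
                = (G.neighborFinset v ∩ S) ∪ (G.neighborFinset v ∩ (X \ S)) := by
              rw [← Finset.inter_union_distrib_left]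
              rw [Finset.union_sdiff_of_subset hSX, Finset.inter_eq_left.mpr hNv]
            have hdisj2 : Disjoint (G.neighborFinset v ∩ S) (G.neighborFinset v ∩ (X \ S)) :=
              Finset.disjoint_of_subset_left (Finset.inter_subset_right)
                (Finset.disjoint_of_subset_right (Finset.inter_subset_right)
                  Finset.disjoint_sdiff)
            have hcards : (G.neighborFinset v ∩ S).card + (G.neighborFinset v ∩ (X \ S)).card = s := by
              rw [← Finset.card_union_of_disjoint hdisj2, ← hsplit]
              exact hcardY v hvY
            omega
        _ = ψ * W.card := by rw [Finset.sum_const, smul_eq_mul, mul_comm]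
    have hTb : ∑ u ∈ S, (G.neighborFinset u ∩ (Y \ NA)).card ≤ ψ * T.card := by
      have hSsplit : S = B ∪ T := by
        rw [hT, Finset.union_sdiff_of_subset hSA]
      rw [hSsplit, Finset.sum_union Finset.disjoint_sdiff]
      have hBzero : ∑ u ∈ B, (G.neighborFinset u ∩ (Y \ NA)).card = 0 := by
        refine Finset.sum_eq_zero fun u hu => ?_
        rw [Finset.card_eq_zero, Finset.eq_empty_iff_forall_notMem]
        intro v hv
        rcases Finset.mem_inter.mp hv with ⟨hv1, hv2⟩
        exact (Finset.mem_sdiff.mp hv2).2 (hBclose u hu hv1)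
      rw [hBzero, zero_add]
      calc ∑ u ∈ T, (G.neighborFinset u ∩ (Y \ NA)).card ≤ ∑ u ∈ T, ψ := by
            refine Finset.sum_le_sum fun u hu => ?_
            have huS : u ∈ S := (Finset.mem_sdiff.mp hu).1
            have hdisj3 : Disjoint (G.neighborFinset u ∩ F) (G.neighborFinset u ∩ (Y \ NA)) := by
              refine Finset.disjoint_of_subset_left (Finset.inter_subset_right) ?_
              refine Finset.disjoint_of_subset_right (Finset.inter_subset_right) ?_
              exact Finset.disjoint_of_subset_left hFN Finset.disjoint_sdiff
            have hle : (G.neighborFinset u ∩ F).card + (G.neighborFinset u ∩ (Y \ NA)).card ≤ q := by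
              rw [← Finset.card_union_of_disjoint hdisj3, ← hcardX u (hSX huS)]
              exact Finset.card_le_card (Finset.union_subset
                (Finset.inter_subset_left) (Finset.inter_subset_left))
            have := hSdeg u huS
            omega
        _ = ψ * T.card := by rw [Finset.sum_const, smul_eq_mul, mul_comm]
    omega
  -- final real arithmetic
  have hq0 : (0:ℝ) < q := by exact_mod_cast Nat.pos_of_ne_zero (by omega)
  have hqψ : (0:ℝ) < (q:ℝ) - ψ := by
    have : (ψ:ℝ) < q := by exact_mod_cast hq
    linarith
  have hsψ : (0:ℝ) < (s:ℝ) - ψ := by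
    have : (ψ:ℝ) < s := by exact_mod_cast hs
    linarith
  have hψ0 : (0:ℝ) ≤ ψ := Nat.cast_nonneg ψ
  have hDeq : (g:ℝ) * s - (a:ℝ) * q = (D:ℝ) := by
    have h := fact1
    have h' : ((a:ℝ)) * q + D = (g:ℝ) * s := by exact_mod_cast h
    linarith
  have hTc : (T.card:ℝ) ≤ (D:ℝ) / ((q:ℝ) - ψ) := by
    rw [le_div_iff₀ hqψ, mul_comm]
    have h := fact2
    have h' : ((q:ℝ) - ψ) * T.card ≤ D := by
      have : (((q - ψ) * T.card : ℕ) : ℝ) ≤ (D:ℝ) := by exact_mod_cast h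
      rw [Nat.cast_mul, Nat.cast_sub hq.le] at this
      exact this
    exact h'
  have hWc : (W.card:ℝ) ≤ (D:ℝ) / ((s:ℝ) - ψ) := by
    rw [le_div_iff₀ hsψ, mul_comm]
    have h := fact3
    have h' : ((s:ℝ) - ψ) * W.card ≤ D := by
      have : (((s - ψ) * W.card : ℕ) : ℝ) ≤ (D:ℝ) := by exact_mod_cast h
      rw [Nat.cast_mul, Nat.cast_sub hs.le] at this
      exact this
    exact h'
  have h4 : (q:ℝ) * S.card ≤ (s:ℝ) * F.card + (ψ:ℝ) * W.card + (ψ:ℝ) * T.card := by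
    exact_mod_cast fact4
  rw [hDeq]
  have heq : ((s:ℝ)/q) * F.card + (ψ:ℝ) * (D:ℝ) / q * (1/((q:ℝ)-ψ) + 1/((s:ℝ)-ψ))
      = ((s:ℝ) * F.card + (ψ:ℝ) * ((D:ℝ)/((s:ℝ)-ψ)) + (ψ:ℝ) * ((D:ℝ)/((q:ℝ)-ψ))) / q := by
    field_simp
    ring
  rw [heq, le_div_iff₀ hq0]
  have h1 : (ψ:ℝ) * W.card ≤ (ψ:ℝ) * ((D:ℝ)/((s:ℝ)-ψ)) := mul_le_mul_of_nonneg_left hWc hψ0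
  have h2 : (ψ:ℝ) * T.card ≤ (ψ:ℝ) * ((D:ℝ)/((q:ℝ)-ψ)) := mul_le_mul_of_nonneg_left hTc hψ0
  linarith [h4, h1, h2, mul_comm (q:ℝ) (S.card:ℝ)]
end

section
/- Let Σ be a (q,s)-biregular bipartite graph with bipartition X ∪ Y. For integers a, g, let G(a,g) := { A ⊆ X : A is 2-linked, |[A]| = a, |N(A)| = g } and set t := gs − aq. Fix 1 ≤ φ ≤ s−1 and a set F' ⊆ Y, and let G'(F') := { A ∈ G(a,g) : F' is a φ-approximation of A }. Then for every 1 ≤ ψ ≤ min{q,s}−1, there exists a family A₂ ⊆ 2^X × 2^Y of size |A₂| ≤ ( Σ_{i ≤ t/((s−φ)ψ)} \binom{gs}{i} ) · ( Σ_{i ≤ t/((q−ψ)ψ)} \binom{gsq}{i} ) and a map π₂ : G'(F') → A₂ such that for every A ∈ G'(F'), the pair π₂(A) is a ψ-approximation of A. -/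
open Finset

/-- `N(A)^φ = { y ∈ N(A) : |N(y) ∩ [A]| > φ }`. -/
def nbhdPhi {V : Type} [Fintype V] [DecidableEq V] (G : SimpleGraph V)
    [DecidableRel G.Adj] (X A : Finset V) (φ : ℕ) : Finset V :=
  (nbhd G A).filter fun y => φ < (G.neighborFinset y ∩ closureOf G X A).card

/-!
Both halves of a ψ-approximation are produced by greedy procedures whose steps are paid for by
the deficit `t = gs - aq`, which double counting expresses both as `∑_{v ∈ N(A)} (s - d_[A](v))`
and as `∑_{u ∈ X \ [A]} d_{N(A)}(u)`.

First, while some `u ∈ [A]` has fewer than `q - ψ` neighbours in the current `F ⊇ F'`, add `N(u)`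
to `F`. Each step uncovers more than `ψ` vertices of `N(A) \ F'`, and each of them has deficit at
least `s - φ` since `F' ⊇ N(A)^φ`; so at most `t / ((s - φ) ψ)` vertices `W₁ ⊆ [A] ⊆ N(F')` are
chosen. Let `S₀` be the vertices of `X` with at least `q - ψ` neighbours in `F' ∪ N(W₁) ⊆ N(A)`.
Second, while some `v ∉ N(A)` has more than `ψ` neighbours in the current `S ⊆ S₀`, remove them
from `S`. They lie outside `[A]` and each sends at least `q - ψ` edges into `N(A)`, so at most
`t / ((q - ψ) ψ)` vertices `W₂ ⊆ N(S₀)` are chosen.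

The ψ-approximation `(S₀ \ N(W₂), F' ∪ N(W₁) ∪ {v ∈ Y : d_{S₀ \ N(W₂)}(v) > ψ})` depends only on
`(W₁, W₂)`, and there are few such pairs because `|N(F')| ≤ gs` and `|N(S₀)| ≤ gsq`.
-/

theorem exists_greedy_cover {α β R : Type*} [DecidableEq α] [DecidableEq β]
    [AddCommMonoid R] [PartialOrder R] [IsOrderedAddMonoid R]
    (N : β → Finset α) (K : Finset β) (ψ : ℕ) (w : α → R) {c : R} (hc : 0 ≤ c)
    (P : Finset α) (hw : ∀ x ∈ P, c ≤ w x) :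
    ∃ W ⊆ K, (∀ k ∈ K, #(N k ∩ (P \ W.biUnion N)) ≤ ψ) ∧
      (#W * (ψ + 1)) • c ≤ ∑ x ∈ P, w x := by
  induction P using Finset.strongInduction with
  | H P ih =>
  by_cases hdone : ∀ k ∈ K, #(N k ∩ P) ≤ ψ
  · exact ⟨∅, empty_subset K, by simpa using hdone,
      by simpa using sum_nonneg fun x hx => hc.trans (hw x hx)⟩
  push Not at hdone
  obtain ⟨k, hk, hbig⟩ := hdone
  have hshrink : P \ N k ⊂ P := by
    rw [← sdiff_inter_self_right]
    exact sdiff_ssubset inter_subset_right (card_pos.1 (by omega))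
  obtain ⟨W, hWK, hcov, hsum⟩ :=
    ih _ hshrink fun x hx => hw x (mem_sdiff.1 hx).1
  refine ⟨insert k W, insert_subset hk hWK, fun k' hk' => ?_, ?_⟩
  · rw [biUnion_insert, ← sup_eq_union, ← sdiff_sdiff_left]
    exact hcov k' hk'
  · have hremoved : (ψ + 1) • c ≤ ∑ x ∈ P ∩ N k, w x := by
      calc (ψ + 1) • c ≤ #(P ∩ N k) • c := by
            rw [inter_comm]; exact nsmul_le_nsmul_left hc hbig
        _ ≤ _ := card_nsmul_le_sum _ _ _ fun x hx => hw x (mem_inter.1 hx).1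
    calc (#(insert k W) * (ψ + 1)) • c ≤ (#W * (ψ + 1)) • c + (ψ + 1) • c := by
          rw [← add_nsmul]
          exact nsmul_le_nsmul_left hc (by nlinarith [card_insert_le k W])
      _ ≤ ∑ x ∈ P \ N k, w x + ∑ x ∈ P ∩ N k, w x := add_le_add hsum hremoved
      _ = ∑ x ∈ P, w x := by rw [add_comm, sum_inter_add_sum_sdiff]

theorem card_powerset_filter_card_le_le_sum_choose {α : Type*} {U : Finset α}
    {n : ℕ} (hU : #U ≤ n) (k : ℕ) :
    #{W ∈ U.powerset | #W ≤ k} ≤ ∑ i ∈ range (k + 1), n.choose i := by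
  classical
  calc #{W ∈ U.powerset | #W ≤ k}
      ≤ #((range (k + 1)).biUnion fun i => U.powersetCard i) := by
        refine card_le_card fun W hW => ?_
        rw [mem_filter, mem_powerset] at hW
        exact mem_biUnion.2 ⟨#W, mem_range.2 (by omega), mem_powersetCard.2 ⟨hW.1, rfl⟩⟩
    _ ≤ ∑ i ∈ range (k + 1), #(U.powersetCard i) := card_biUnion_le
    _ ≤ ∑ i ∈ range (k + 1), n.choose i :=
        sum_le_sum fun i _ => (card_powersetCard i U).trans_le (Nat.choose_le_choose i hU)

section Encoding

variable {α β : Type*} [DecidableEq β]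

def encodedFamily (U₁ : Finset α) (U₂ : Finset α → Finset α) (k₁ k₂ n₂ : ℕ)
    (f : Finset α → Finset α → β) : Finset β :=
  {W₁ ∈ U₁.powerset | #W₁ ≤ k₁ ∧ #(U₂ W₁) ≤ n₂}.biUnion fun W₁ =>
    {W₂ ∈ (U₂ W₁).powerset | #W₂ ≤ k₂}.image (f W₁)

variable {U₁ : Finset α} {U₂ : Finset α → Finset α} {k₁ k₂ n₁ n₂ : ℕ}
  {f : Finset α → Finset α → β}

theorem card_encodedFamily_le (hU₁ : #U₁ ≤ n₁) :
    #(encodedFamily U₁ U₂ k₁ k₂ n₂ f) ≤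
      (∑ i ∈ range (k₁ + 1), n₁.choose i) * ∑ i ∈ range (k₂ + 1), n₂.choose i :=
  calc #(encodedFamily U₁ U₂ k₁ k₂ n₂ f)
      ≤ ∑ W₁ ∈ {W₁ ∈ U₁.powerset | #W₁ ≤ k₁ ∧ #(U₂ W₁) ≤ n₂},
          #{W₂ ∈ (U₂ W₁).powerset | #W₂ ≤ k₂} :=
        card_biUnion_le.trans (sum_le_sum fun _ _ => card_image_le)
    _ ≤ #{W₁ ∈ U₁.powerset | #W₁ ≤ k₁ ∧ #(U₂ W₁) ≤ n₂} *
          ∑ i ∈ range (k₂ + 1), n₂.choose i := by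
        rw [← smul_eq_mul, ← sum_const]
        exact sum_le_sum fun W₁ hW₁ =>
          card_powerset_filter_card_le_le_sum_choose (mem_filter.1 hW₁).2.2 k₂
    _ ≤ _ := by
        refine Nat.mul_le_mul_right _ ((card_le_card fun W₁ hW₁ => ?_).trans
          (card_powerset_filter_card_le_le_sum_choose hU₁ k₁))
        simp only [mem_filter] at hW₁ ⊢
        exact ⟨hW₁.1, hW₁.2.1⟩

theorem mem_encodedFamily {W₁ W₂ : Finset α} (hW₁ : W₁ ⊆ U₁) (hk₁ : #W₁ ≤ k₁)
    (hn₂ : #(U₂ W₁) ≤ n₂) (hW₂ : W₂ ⊆ U₂ W₁) (hk₂ : #W₂ ≤ k₂) :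
    f W₁ W₂ ∈ encodedFamily U₁ U₂ k₁ k₂ n₂ f :=
  mem_biUnion.2 ⟨W₁, mem_filter.2 ⟨mem_powerset.2 hW₁, hk₁, hn₂⟩,
    mem_image_of_mem _ (mem_filter.2 ⟨mem_powerset.2 hW₂, hk₂⟩)⟩

end Encoding

theorem le_floor_div_of_nsmul_le {k ψ : ℕ} {c T : ℝ} (hc : 0 < c) (hψ : 0 < ψ)
    (h : (k * (ψ + 1)) • c ≤ T) : k ≤ ⌊T / (c * ψ)⌋₊ := by
  refine Nat.le_floor ((le_div_iff₀ (by positivity)).2 ?_)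
  rw [nsmul_eq_mul] at h
  push_cast at h
  nlinarith [(Nat.cast_nonneg k : (0 : ℝ) ≤ k)]

section Graph

variable {V : Type} [Fintype V] (G : SimpleGraph V) [DecidableRel G.Adj]

structure IsBiregular (X Y : Finset V) (q s : ℕ) : Prop where
  disjoint : Disjoint X Y
  adj_mem : ∀ u v, G.Adj u v → (u ∈ X ∧ v ∈ Y) ∨ (u ∈ Y ∧ v ∈ X)
  degree_left : ∀ x ∈ X, G.degree x = q
  degree_right : ∀ y ∈ Y, G.degree y = s

namespace IsBiregular

variable {G} {X Y : Finset V} {q s : ℕ}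

theorem neighborFinset_subset_right (hG : IsBiregular G X Y q s) {x : V} (hx : x ∈ X) :
    G.neighborFinset x ⊆ Y :=
  fun y hy => ((hG.adj_mem x y ((G.mem_neighborFinset x y).1 hy)).resolve_right
    fun h => disjoint_left.1 hG.disjoint hx h.1).2

theorem neighborFinset_subset_left (hG : IsBiregular G X Y q s) {y : V} (hy : y ∈ Y) :
    G.neighborFinset y ⊆ X :=
  fun x hx => ((hG.adj_mem y x ((G.mem_neighborFinset y x).1 hx)).resolve_left
    fun h => disjoint_left.1 hG.disjoint h.1 hy).2

end IsBiregular

variable [DecidableEq V]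

def highDegIn (X F : Finset V) (m : ℕ) : Finset V :=
  {u ∈ X | m ≤ #(G.neighborFinset u ∩ F)}

def IsPsiApprox (X Y A : Finset V) (q s ψ : ℕ) (p : Finset V × Finset V) : Prop :=
  p.2 ⊆ nbhd G A ∧ closureOf G X A ⊆ p.1 ∧
    (∀ u ∈ p.1, q - ψ ≤ #(G.neighborFinset u ∩ p.2)) ∧
    (∀ v ∈ Y \ p.2, s - ψ ≤ #(G.neighborFinset v ∩ (X \ p.1)))

/-- The decoder: `S` keeps the vertices of `X` well covered by `F` and not adjacent to `W`, and
`F` is enlarged by the vertices of `Y` with more than `ψ` neighbours in `S`. -/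
def psiApproxOf (X Y F W : Finset V) (q ψ : ℕ) : Finset V × Finset V :=
  (highDegIn G X F (q - ψ) \ nbhd G W,
    F ∪ highDegIn G Y (highDegIn G X F (q - ψ) \ nbhd G W) (ψ + 1))

theorem closureOf_subset (X A : Finset V) : closureOf G X A ⊆ X :=
  filter_subset _ _

variable {G}

theorem mem_nbhd {A : Finset V} {v : V} : v ∈ nbhd G A ↔ ∃ u ∈ A, G.Adj u v := by
  simp [nbhd]

theorem mem_nbhd_of_mem_closureOf {X A : Finset V} {u v : V} (hu : u ∈ closureOf G X A)
    (huv : G.Adj u v) : v ∈ nbhd G A :=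
  (mem_filter.1 hu).2 ((G.mem_neighborFinset u v).2 huv)

theorem nbhd_subset_of_subset_closureOf {X A W : Finset V} (hW : W ⊆ closureOf G X A) :
    nbhd G W ⊆ nbhd G A :=
  biUnion_subset.2 fun _ hu => (mem_filter.1 (hW hu)).2

theorem card_nbhd_le_mul {B : Finset V} {d : ℕ} (hB : ∀ y ∈ B, G.degree y = d) :
    #(nbhd G B) ≤ #B * d :=
  card_biUnion_le.trans_eq <| by
    rw [sum_congr rfl fun y hy => (G.card_neighborFinset_eq_degree y).trans (hB y hy),
      sum_const, smul_eq_mul]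

theorem highDegIn_subset_nbhd {X F : Finset V} {m : ℕ} (hm : 0 < m) :
    highDegIn G X F m ⊆ nbhd G F := fun u hu => by
  obtain ⟨v, hv⟩ := card_pos.1 (hm.trans_le (mem_filter.1 hu).2)
  rw [mem_inter, G.mem_neighborFinset] at hv
  exact mem_nbhd.2 ⟨v, hv.2, hv.1.symm⟩

theorem sum_card_neighborFinset_inter_comm (B C : Finset V) :
    ∑ v ∈ B, #(G.neighborFinset v ∩ C) = ∑ u ∈ C, #(G.neighborFinset u ∩ B) := by
  have h : ∀ (D : Finset V) v, G.neighborFinset v ∩ D = {u ∈ D | G.Adj v u} := fun D v => by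
    ext u; simp [and_comm]
  simp only [h]
  simpa [bipartiteAbove, bipartiteBelow, G.adj_comm] using
    sum_card_bipartiteAbove_eq_sum_card_bipartiteBelow G.Adj (s := B) (t := C)

namespace IsBiregular

variable {X Y : Finset V} {q s : ℕ} (hG : IsBiregular G X Y q s)
include hG

theorem nbhd_subset {A : Finset V} (hA : A ⊆ X) : nbhd G A ⊆ Y :=
  biUnion_subset.2 fun _ hx => hG.neighborFinset_subset_right (hA hx)

theorem card_nbhd_le_of_subset_nbhd {A F : Finset V} (hA : A ⊆ X) (hF : F ⊆ nbhd G A) :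
    #(nbhd G F) ≤ #(nbhd G A) * s :=
  (card_nbhd_le_mul fun y hy => hG.degree_right y (hG.nbhd_subset hA (hF hy))).trans
    (Nat.mul_le_mul_right s (card_le_card hF))

theorem card_nbhd_highDegIn_le {A F : Finset V} {m : ℕ} (hA : A ⊆ X) (hF : F ⊆ nbhd G A)
    (hm : 0 < m) : #(nbhd G (highDegIn G X F m)) ≤ #(nbhd G A) * s * q :=
  (card_nbhd_le_mul fun u hu => hG.degree_left u (mem_filter.1 hu).1).trans
    (Nat.mul_le_mul_right q ((card_le_card (highDegIn_subset_nbhd hm)).trans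
      (hG.card_nbhd_le_of_subset_nbhd hA hF)))

theorem sum_card_inter_nbhd {A : Finset V} (hA : A ⊆ X) :
    ∑ u ∈ X, #(G.neighborFinset u ∩ nbhd G A) = #(nbhd G A) * s := by
  rw [sum_card_neighborFinset_inter_comm, ← smul_eq_mul, ← sum_const]
  refine sum_congr rfl fun v hv => ?_
  rw [inter_eq_left.2 (hG.neighborFinset_subset_left (hG.nbhd_subset hA hv)),
    G.card_neighborFinset_eq_degree, hG.degree_right v (hG.nbhd_subset hA hv)]

theorem sum_closureOf_card_inter_nbhd (A : Finset V) :
    ∑ u ∈ closureOf G X A, #(G.neighborFinset u ∩ nbhd G A) = #(closureOf G X A) * q := by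
  rw [← smul_eq_mul, ← sum_const]
  refine sum_congr rfl fun u hu => ?_
  rw [inter_eq_left.2 (mem_filter.1 hu).2, G.card_neighborFinset_eq_degree,
    hG.degree_left u (mem_filter.1 hu).1]

theorem sum_sub_card_inter_closureOf (A : Finset V) :
    ∑ v ∈ nbhd G A, ((s : ℝ) - #(G.neighborFinset v ∩ closureOf G X A)) =
      #(nbhd G A) * s - #(closureOf G X A) * q := by
  rw [sum_sub_distrib, sum_const, nsmul_eq_mul, ← Nat.cast_sum,
    sum_card_neighborFinset_inter_comm, hG.sum_closureOf_card_inter_nbhd]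
  push_cast
  ring

theorem sum_sdiff_closureOf_card_inter_nbhd {A : Finset V} (hA : A ⊆ X) :
    ∑ u ∈ X \ closureOf G X A, (#(G.neighborFinset u ∩ nbhd G A) : ℝ) =
      #(nbhd G A) * s - #(closureOf G X A) * q := by
  have h := sum_sdiff (f := fun u => #(G.neighborFinset u ∩ nbhd G A)) (closureOf_subset G X A)
  rw [hG.sum_card_inter_nbhd hA, hG.sum_closureOf_card_inter_nbhd] at h
  rw [eq_sub_iff_add_eq, ← Nat.cast_sum]
  exact_mod_cast h

theorem exists_closureOf_subset_highDegIn {A F' : Finset V} {φ ψ : ℕ} (hA : A ⊆ X)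
    (hφ : nbhdPhi G X A φ ⊆ F') (hφs : φ < s) (hψ : 0 < ψ) :
    ∃ W ⊆ closureOf G X A, closureOf G X A ⊆ highDegIn G X (F' ∪ nbhd G W) (q - ψ) ∧
      #W ≤ ⌊((#(nbhd G A) : ℝ) * s - #(closureOf G X A) * q) / ((s - φ) * ψ)⌋₊ := by
  have hdeg : ∀ v ∈ nbhd G A, #(G.neighborFinset v ∩ closureOf G X A) ≤ s := fun v hv =>
    (card_le_card inter_subset_left).trans_eq
      ((G.card_neighborFinset_eq_degree v).trans (hG.degree_right v (hG.nbhd_subset hA hv)))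
  have hlow : ∀ v ∈ nbhd G A \ F', #(G.neighborFinset v ∩ closureOf G X A) ≤ φ := fun v hv =>
    not_lt.1 fun h => (mem_sdiff.1 hv).2 (hφ (mem_filter.2 ⟨(mem_sdiff.1 hv).1, h⟩))
  have hc : (0 : ℝ) < s - φ := sub_pos.2 (by exact_mod_cast hφs)
  obtain ⟨W, hW, hcov, hsum⟩ := exists_greedy_cover (fun v => G.neighborFinset v)
    (closureOf G X A) ψ (fun v => (s : ℝ) - #(G.neighborFinset v ∩ closureOf G X A)) hc.le
    (nbhd G A \ F') fun v hv => sub_le_sub_left (by exact_mod_cast hlow v hv) _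
  refine ⟨W, hW, fun u hu => mem_filter.2 ⟨(mem_filter.1 hu).1, ?_⟩,
    le_floor_div_of_nsmul_le hc hψ (hsum.trans ?_)⟩
  · have hsplit : G.neighborFinset u ⊆ (G.neighborFinset u ∩ (F' ∪ nbhd G W)) ∪
        (G.neighborFinset u ∩ ((nbhd G A \ F') \ nbhd G W)) := fun v hv => by
      have := (mem_filter.1 hu).2 hv
      simp only [mem_union, mem_inter, mem_sdiff]
      tauto
    have hq : #(G.neighborFinset u) = q :=
      (G.card_neighborFinset_eq_degree u).trans (hG.degree_left u (mem_filter.1 hu).1)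
    have := (card_le_card hsplit).trans (card_union_le _ _)
    have hrest : #(G.neighborFinset u ∩ ((nbhd G A \ F') \ nbhd G W)) ≤ ψ := hcov u hu
    omega
  · rw [← hG.sum_sub_card_inter_closureOf A]
    exact sum_le_sum_of_subset_of_nonneg sdiff_subset fun v hv _ =>
      sub_nonneg.2 (by exact_mod_cast hdeg v hv)

theorem exists_disjoint_nbhd_card_inter_le {A F : Finset V} {ψ : ℕ} (hA : A ⊆ X)
    (hF : F ⊆ nbhd G A) (hψq : ψ < q) (hψ : 0 < ψ) :
    ∃ W ⊆ nbhd G (highDegIn G X F (q - ψ)), Disjoint W (nbhd G A) ∧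
      (∀ v ∉ nbhd G A, #(G.neighborFinset v ∩ (highDegIn G X F (q - ψ) \ nbhd G W)) ≤ ψ) ∧
      #W ≤ ⌊((#(nbhd G A) : ℝ) * s - #(closureOf G X A) * q) / ((q - ψ) * ψ)⌋₊ := by
  set S := highDegIn G X F (q - ψ)
  have hc : (0 : ℝ) < q - ψ := sub_pos.2 (by exact_mod_cast hψq)
  obtain ⟨W, hW, hcov, hsum⟩ := exists_greedy_cover (fun v => G.neighborFinset v)
    (nbhd G S \ nbhd G A) ψ (fun u => (#(G.neighborFinset u ∩ F) : ℝ)) hc.le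
    (S \ closureOf G X A) fun u hu => by
      have := (mem_filter.1 (mem_sdiff.1 hu).1).2
      rw [sub_le_iff_le_add]
      exact_mod_cast (by omega : q ≤ #(G.neighborFinset u ∩ F) + ψ)
  refine ⟨W, hW.trans sdiff_subset, disjoint_left.2 fun v hv => (mem_sdiff.1 (hW hv)).2,
    fun v hv => ?_, le_floor_div_of_nsmul_le hc hψ (hsum.trans ?_)⟩
  · by_cases hvS : v ∈ nbhd G S
    · refine (card_le_card fun u hu => ?_).trans (hcov v (mem_sdiff.2 ⟨hvS, hv⟩))
      obtain ⟨hvu, huS, huW⟩ : u ∈ G.neighborFinset v ∧ u ∈ S ∧ u ∉ nbhd G W := by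
        simpa only [mem_inter, mem_sdiff] using hu
      have hucl : u ∉ closureOf G X A := fun hucl =>
        hv (mem_nbhd_of_mem_closureOf hucl ((G.mem_neighborFinset v u).1 hvu).symm)
      simpa only [nbhd, mem_inter, mem_sdiff] using ⟨hvu, ⟨huS, hucl⟩, huW⟩
    · refine (card_eq_zero.2 (eq_empty_of_forall_notMem fun u hu => hvS ?_)).trans_le
        (Nat.zero_le ψ)
      obtain ⟨hvu, huS, -⟩ : u ∈ G.neighborFinset v ∧ u ∈ S ∧ u ∉ nbhd G W := by
        simpa only [mem_inter, mem_sdiff] using hu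
      exact mem_nbhd.2 ⟨u, huS, ((G.mem_neighborFinset v u).1 hvu).symm⟩
  · calc ∑ u ∈ S \ closureOf G X A, (#(G.neighborFinset u ∩ F) : ℝ)
        ≤ ∑ u ∈ X \ closureOf G X A, (#(G.neighborFinset u ∩ nbhd G A) : ℝ) :=
          (sum_le_sum fun _ _ => by exact_mod_cast card_le_card (inter_subset_inter_left hF)).trans
            (sum_le_sum_of_subset_of_nonneg (sdiff_subset_sdiff (filter_subset _ _) subset_rfl)
              fun _ _ _ => Nat.cast_nonneg _)
      _ = _ := hG.sum_sdiff_closureOf_card_inter_nbhd hA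

theorem isPsiApprox_psiApproxOf {A F W : Finset V} {ψ : ℕ} (hF : F ⊆ nbhd G A)
    (hcl : closureOf G X A ⊆ highDegIn G X F (q - ψ)) (hW : Disjoint W (nbhd G A))
    (hcov : ∀ v ∉ nbhd G A, #(G.neighborFinset v ∩ (highDegIn G X F (q - ψ) \ nbhd G W)) ≤ ψ) :
    IsPsiApprox G X Y A q s ψ (psiApproxOf G X Y F W q ψ) := by
  set S := highDegIn G X F (q - ψ) \ nbhd G W
  refine ⟨union_subset hF fun v hv => ?_, fun u hu => mem_sdiff.2 ⟨hcl hu, fun huW => ?_⟩,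
    fun u hu => ?_, fun v hv => ?_⟩
  · by_contra hvA
    exact (mem_filter.1 hv).2.not_gt (Nat.lt_succ_of_le (hcov v hvA))
  · obtain ⟨w, hw, hwu⟩ := mem_nbhd.1 huW
    exact disjoint_left.1 hW hw (mem_nbhd_of_mem_closureOf hu hwu.symm)
  · exact (mem_filter.1 (mem_sdiff.1 hu).1).2.trans
      (card_le_card (inter_subset_inter_left subset_union_left))
  · obtain ⟨hvY, hvF⟩ := mem_sdiff.1 hv
    have hlow : #(G.neighborFinset v ∩ S) ≤ ψ :=
      not_lt.1 fun h => hvF (mem_union_right _ (mem_filter.2 ⟨hvY, h⟩))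
    have hX : G.neighborFinset v ∩ (X \ S) = G.neighborFinset v \ S := by
      rw [← inter_sdiff_assoc, inter_eq_left.2 (hG.neighborFinset_subset_left hvY)]
    have hs : #(G.neighborFinset v) = s :=
      (G.card_neighborFinset_eq_degree v).trans (hG.degree_right v hvY)
    have := card_sdiff_add_card_inter (G.neighborFinset v) S
    change s - ψ ≤ #(G.neighborFinset v ∩ (X \ S))
    rw [hX]
    omega

end IsBiregular

end Graph

theorem psi_approximation_family_general {V : Type} [Fintype V] [DecidableEq V]
    (G : SimpleGraph V) [DecidableRel G.Adj] (X Y : Finset V) (q s : ℕ)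
    (hdisj : Disjoint X Y)
    (hbip : ∀ u v : V, G.Adj u v → (u ∈ X ∧ v ∈ Y) ∨ (u ∈ Y ∧ v ∈ X))
    (hdegX : ∀ x ∈ X, G.degree x = q) (hdegY : ∀ y ∈ Y, G.degree y = s)
    (a g : ℕ) (t : ℝ) (ht : t = (g : ℝ) * s - (a : ℝ) * q)
    (φ : ℕ) (hφ2 : φ ≤ s - 1) (F' : Finset V)
    (ψ : ℕ) (hψ1 : 1 ≤ ψ) (hψ2 : ψ ≤ min q s - 1) :
    ∃ A₂ : Finset (Finset V × Finset V),
      (A₂.card : ℝ) ≤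
        (∑ i ∈ Finset.range (⌊t / (((s : ℝ) - φ) * ψ)⌋₊ + 1),
          ((g * s).choose i : ℝ)) *
        (∑ i ∈ Finset.range (⌊t / (((q : ℝ) - ψ) * ψ)⌋₊ + 1),
          ((g * s * q).choose i : ℝ)) ∧
      ∀ A : Finset V, A ⊆ X → MLinked G 2 A →
        (closureOf G X A).card = a → (nbhd G A).card = g →
        (nbhdPhi G X A φ ⊆ F' ∧ F' ⊆ nbhd G A ∧ closureOf G X A ⊆ nbhd G F') →
        ∃ p ∈ A₂,
          p.2 ⊆ nbhd G A ∧ closureOf G X A ⊆ p.1 ∧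
          (∀ u ∈ p.1, q - ψ ≤ (G.neighborFinset u ∩ p.2).card) ∧
          (∀ v ∈ Y \ p.2, s - ψ ≤ (G.neighborFinset v ∩ (X \ p.1)).card) := by
  have hG : IsBiregular G X Y q s := ⟨hdisj, hbip, hdegX, hdegY⟩
  have hψq : ψ < q := by omega
  have hφs : φ < s := by omega
  subst ht
  by_cases hF' : #(nbhd G F') ≤ g * s
  · refine ⟨encodedFamily (nbhd G F')
      (fun W₁ => nbhd G (highDegIn G X (F' ∪ nbhd G W₁) (q - ψ)))
      ⌊((g : ℝ) * s - (a : ℝ) * q) / (((s : ℝ) - φ) * ψ)⌋₊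
      ⌊((g : ℝ) * s - (a : ℝ) * q) / (((q : ℝ) - ψ) * ψ)⌋₊ (g * s * q)
      (fun W₁ W₂ => psiApproxOf G X Y (F' ∪ nbhd G W₁) W₂ q ψ),
      by exact_mod_cast card_encodedFamily_le hF', ?_⟩
    rintro A hA - rfl rfl ⟨hφ, hF'A, hcl⟩
    obtain ⟨W₁, hW₁, hcov₁, hW₁card⟩ := hG.exists_closureOf_subset_highDegIn hA hφ hφs hψ1
    have hF''A : F' ∪ nbhd G W₁ ⊆ nbhd G A :=
      union_subset hF'A (nbhd_subset_of_subset_closureOf hW₁)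
    obtain ⟨W₂, hW₂, hW₂A, hcov₂, hW₂card⟩ :=
      hG.exists_disjoint_nbhd_card_inter_le hA hF''A hψq hψ1
    exact ⟨_, mem_encodedFamily (hW₁.trans hcl) hW₁card
      (hG.card_nbhd_highDegIn_le hA hF''A (by omega)) hW₂ hW₂card,
      hG.isPsiApprox_psiApproxOf hF''A hcov₁ hW₂A hcov₂⟩
  · refine ⟨∅, by simp only [card_empty, Nat.cast_zero]; positivity, ?_⟩
    rintro A hA - - rfl ⟨-, hF'A, -⟩
    exact absurd (hG.card_nbhd_le_of_subset_nbhd hA hF'A) hF'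

/-- From a fixed φ-approximation F' to a small family of
ψ-approximations, in a (q,s)-biregular bipartite graph. -/
theorem psi_approximation_family {V : Type} [Fintype V] [DecidableEq V]
    (G : SimpleGraph V) [DecidableRel G.Adj] (X Y : Finset V) (q s : ℕ)
    (hdisj : Disjoint X Y) (hunion : X ∪ Y = Finset.univ)
    (hbip : ∀ u v : V, G.Adj u v → (u ∈ X ∧ v ∈ Y) ∨ (u ∈ Y ∧ v ∈ X))
    (hdegX : ∀ x ∈ X, G.degree x = q) (hdegY : ∀ y ∈ Y, G.degree y = s)
    (a g : ℕ) (t : ℝ) (ht : t = (g : ℝ) * s - (a : ℝ) * q)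
    (φ : ℕ) (hφ1 : 1 ≤ φ) (hφ2 : φ ≤ s - 1) (F' : Finset V)
    (ψ : ℕ) (hψ1 : 1 ≤ ψ) (hψ2 : ψ ≤ min q s - 1) :
    ∃ A₂ : Finset (Finset V × Finset V),
      (A₂.card : ℝ) ≤
        (∑ i ∈ Finset.range (⌊t / (((s : ℝ) - φ) * ψ)⌋₊ + 1),
          ((g * s).choose i : ℝ)) *
        (∑ i ∈ Finset.range (⌊t / (((q : ℝ) - ψ) * ψ)⌋₊ + 1),
          ((g * s * q).choose i : ℝ)) ∧
      ∀ A : Finset V, A ⊆ X → MLinked G 2 A →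
        (closureOf G X A).card = a → (nbhd G A).card = g →
        (nbhdPhi G X A φ ⊆ F' ∧ F' ⊆ nbhd G A ∧ closureOf G X A ⊆ nbhd G F') →
        ∃ p ∈ A₂,
          p.2 ⊆ nbhd G A ∧ closureOf G X A ⊆ p.1 ∧
          (∀ u ∈ p.1, q - ψ ≤ (G.neighborFinset u ∩ p.2).card) ∧
          (∀ v ∈ Y \ p.2, s - ψ ≤ (G.neighborFinset v ∩ (X \ p.1)).card) :=
  psi_approximation_family_general G X Y q s hdisj hbip hdegX hdegY a g t ht φ hφ2 F' ψ hψ1 hψ2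
end

section
/- Let Σ be a bipartite graph with bipartition X ∪ Y in which every vertex of X has at least one neighbor. If A ⊆ X is a 2-linked set, then its closure [A] is also 2-linked. -/
open Finset

/-! Every `v ∈ [A]` has a neighbour `y`, and `y ∈ N(A)`, so `v` is within distance 2 of `A`.
A chain in `A` linking vertices 2-close to `u` and to `v` then links `u` and `v` in `[A] ⊇ A`. -/

theorem distLE.symm {V : Type} {G : SimpleGraph V} {m : ℕ} {u v : V}
    (h : distLE G m u v) : distLE G m v u := by
  obtain ⟨p, hp⟩ := h
  exact ⟨p.reverse, by rwa [SimpleGraph.Walk.length_reverse]⟩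

theorem MLinked.of_subset_of_forall_exists_distLE {V : Type} {G : SimpleGraph V} {m : ℕ}
    {A B : Finset V} (hA : MLinked G m A) (hAB : A ⊆ B)
    (hB : ∀ v ∈ B, ∃ a ∈ A, distLE G m v a) : MLinked G m B := by
  intro u hu v hv
  obtain ⟨a, ha, hua⟩ := hB u hu
  obtain ⟨b, hb, hvb⟩ := hB v hv
  have hab : Relation.ReflTransGen (fun x y => x ∈ B ∧ y ∈ B ∧ distLE G m x y) a b :=
    Relation.ReflTransGen.mono (fun x y h => ⟨hAB h.1, hAB h.2.1, h.2.2⟩) a b (hA a ha b hb)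
  exact .head ⟨hu, hAB ha, hua⟩ (hab.tail ⟨hAB hb, hv, hvb.symm⟩)

section Closure

variable {V : Type} [Fintype V] [DecidableEq V] {G : SimpleGraph V} [DecidableRel G.Adj]
  {X A : Finset V}

theorem subset_closureOf (hAX : A ⊆ X) : A ⊆ closureOf G X A := fun a ha =>
  mem_filter.mpr ⟨hAX ha, fun _ hy => mem_biUnion.mpr ⟨a, ha, hy⟩⟩

theorem exists_distLE_two_of_mem_closureOf {v y : V} (hv : v ∈ closureOf G X A)
    (hvy : G.Adj v y) : ∃ a ∈ A, distLE G 2 v a := by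
  have hyN : y ∈ nbhd G A := (mem_filter.mp hv).2 ((G.mem_neighborFinset v y).mpr hvy)
  obtain ⟨a, ha, hay⟩ := mem_biUnion.mp hyN
  exact ⟨a, ha, .cons hvy (.cons ((G.mem_neighborFinset a y).mp hay).symm .nil), le_rfl⟩

end Closure

theorem closure_two_linked_general {V : Type} [Fintype V] [DecidableEq V]
    (G : SimpleGraph V) [DecidableRel G.Adj] (X : Finset V)
    (hmindeg : ∀ x ∈ X, ∃ y : V, G.Adj x y)
    (A : Finset V) (hAX : A ⊆ X) (hA2 : MLinked G 2 A) :
    MLinked G 2 (closureOf G X A) := by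
  refine hA2.of_subset_of_forall_exists_distLE (subset_closureOf hAX) fun v hv => ?_
  obtain ⟨y, hvy⟩ := hmindeg v (mem_filter.mp hv).1
  exact exists_distLE_two_of_mem_closureOf hv hvy

/-- In a bipartite graph in which every vertex of X has at least one
neighbor, the closure of a 2-linked subset of X is 2-linked. -/
theorem closure_two_linked {V : Type} [Fintype V] [DecidableEq V]
    (G : SimpleGraph V) [DecidableRel G.Adj] (X Y : Finset V)
    (hdisj : Disjoint X Y) (hunion : X ∪ Y = Finset.univ)
    (hbip : ∀ u v : V, G.Adj u v → (u ∈ X ∧ v ∈ Y) ∨ (u ∈ Y ∧ v ∈ X))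
    (hmindeg : ∀ x ∈ X, ∃ y : V, G.Adj x y)
    (A : Finset V) (hAX : A ⊆ X) (hA2 : MLinked G 2 A) :
    MLinked G 2 (closureOf G X A) :=
  closure_two_linked_general G X hmindeg A hAX hA2
end

section
/- Let Σ be a bipartite graph with bipartition X ∪ Y in which every vertex of X has at least one neighbor. Let A ⊆ X be a 2-linked set and let F' ⊆ Y satisfy F' ⊆ N(A) and N(F') ⊇ [A]. Then F' is a 4-linked subset of Y. -/
open Finset

/-- In a bipartite graph in which every vertex of X has at least one
neighbor, if A ⊆ X is 2-linked and F' ⊆ Y satisfies F' ⊆ N(A) and N(F') ⊇ [A],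
then F' is a 4-linked subset of Y. -/
theorem phi_approximation_four_linked {V : Type} [Fintype V] [DecidableEq V]
    (G : SimpleGraph V) [DecidableRel G.Adj] (X Y : Finset V)
    (hdisj : Disjoint X Y) (hunion : X ∪ Y = Finset.univ)
    (hbip : ∀ u v : V, G.Adj u v → (u ∈ X ∧ v ∈ Y) ∨ (u ∈ Y ∧ v ∈ X))
    (hmindeg : ∀ x ∈ X, ∃ y : V, G.Adj x y)
    (A : Finset V) (hAX : A ⊆ X) (hA2 : MLinked G 2 A)
    (F' : Finset V) (hF'Y : F' ⊆ Y)
    (hF'N : F' ⊆ nbhd G A) (hNF' : closureOf G X A ⊆ nbhd G F') :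
    MLinked G 4 F' := by
  classical
  have hpick : ∀ a : V, ∃ g, a ∈ A → g ∈ F' ∧ G.Adj g a := by
    intro a
    by_cases ha : a ∈ A
    · have haC : a ∈ closureOf G X A := by
        simp only [closureOf, mem_filter]
        exact ⟨hAX ha, fun w hw => mem_biUnion.2 ⟨a, ha, hw⟩⟩
      have h := hNF' haC
      simp only [nbhd, mem_biUnion, SimpleGraph.mem_neighborFinset] at h
      obtain ⟨g, hgF, hadj⟩ := h
      exact ⟨g, fun _ => ⟨hgF, hadj⟩⟩
    · exact ⟨a, fun h => absurd h ha⟩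
  choose f hf using hpick
  intro u hu v hv
  have hu' := hF'N hu
  have hv' := hF'N hv
  simp only [nbhd, mem_biUnion, SimpleGraph.mem_neighborFinset] at hu' hv'
  obtain ⟨a, haA, hau⟩ := hu'
  obtain ⟨b, hbA, hbv⟩ := hv'
  have key : ∀ {x y : V},
      Relation.ReflTransGen (fun a b => a ∈ A ∧ b ∈ A ∧ distLE G 2 a b) x y →
      Relation.ReflTransGen (fun a b => a ∈ F' ∧ b ∈ F' ∧ distLE G 4 a b) (f x) (f y) := by
    intro x y h
    induction h with
    | refl => exact .refl
    | @tail p q hxp hstep ih =>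
      obtain ⟨hpA, hqA, w, hw⟩ := hstep
      refine ih.tail ⟨(hf p hpA).1, (hf q hqA).1, ?_⟩
      refine ⟨SimpleGraph.Walk.cons (hf p hpA).2
        (w.append (SimpleGraph.Walk.cons (hf q hqA).2.symm SimpleGraph.Walk.nil)), ?_⟩
      simp only [SimpleGraph.Walk.length_cons, SimpleGraph.Walk.length_append,
        SimpleGraph.Walk.length_nil]
      omega
  have hchain := key (hA2 a haA b hbA)
  have h1 : Relation.ReflTransGen (fun a b => a ∈ F' ∧ b ∈ F' ∧ distLE G 4 a b) u (f a) :=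
    Relation.ReflTransGen.single ⟨hu, (hf a haA).1,
      ⟨SimpleGraph.Walk.cons hau.symm
        (SimpleGraph.Walk.cons (hf a haA).2.symm SimpleGraph.Walk.nil), by simp⟩⟩
  have h2 : Relation.ReflTransGen (fun a b => a ∈ F' ∧ b ∈ F' ∧ distLE G 4 a b) (f b) v :=
    Relation.ReflTransGen.single ⟨(hf b hbA).1, hv,
      ⟨SimpleGraph.Walk.cons (hf b hbA).2
        (SimpleGraph.Walk.cons hbv SimpleGraph.Walk.nil), by simp⟩⟩
  exact h1.trans (hchain.trans h2)
end

section
/- Let Σ be a (q,s)-biregular bipartite graph with bipartition X ∪ Y, let A ⊆ X with |[A]| = a and |N(A)| = g, set t := gs − aq, fix 1 ≤ φ ≤ s−1, let m_φ := min{ |N(K)| : y ∈ Y, K ⊆ N(y), |K| > φ }, and let p := C·ln q/(φq) for some C > 0 with p ≤ 1. Then there exists a set T₀ ⊆ N(A) such that: (i) |T₀| ≤ 3gp; (ii) the number of edges of Σ between T₀ and X \setminus [A] is at most 3tp; and (iii) |N(A)^φ \setminus N(N(T₀) ∩ [A])| ≤ 3g·exp(−p·m_φ). -/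
open Finset

/-- `m_φ` : the minimum of `|N(K)|` over sets `K ⊆ N(y)`, `y ∈ Y`, with `|K| > φ`. -/
noncomputable def mPhi {V : Type} [Fintype V] [DecidableEq V] (G : SimpleGraph V)
    [DecidableRel G.Adj] (Y : Finset V) (φ : ℕ) : ℕ :=
  sInf {c : ℕ | ∃ y ∈ Y, ∃ K : Finset V,
    K ⊆ G.neighborFinset y ∧ φ < K.card ∧ (nbhd G K).card = c}


lemma key_sum {V : Type} [DecidableEq V] (p : ℝ) (S S0 : Finset V) (h : S0 ⊆ S) :
    ∑ T ∈ S0.powerset, p ^ T.card * (1 - p) ^ (S.card - T.card)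
      = (1 - p) ^ (S.card - S0.card) := by
  have base : ∑ T ∈ S0.powerset, p ^ T.card * (1 - p) ^ (S0.card - T.card) = 1 := by
    have := Finset.prod_add (fun _ : V => p) (fun _ => 1 - p) S0
    simp only [add_sub_cancel, Finset.prod_const, one_pow] at this
    rw [Finset.sum_congr rfl (fun T hT => ?_)] at this
    · exact this.symm
    · rw [Finset.card_sdiff_of_subset (Finset.mem_powerset.1 hT)]
  calc ∑ T ∈ S0.powerset, p ^ T.card * (1 - p) ^ (S.card - T.card)
      = ∑ T ∈ S0.powerset, (1 - p) ^ (S.card - S0.card) *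
          (p ^ T.card * (1 - p) ^ (S0.card - T.card)) := by
        refine Finset.sum_congr rfl fun T hT => ?_
        have hT' := Finset.mem_powerset.1 hT
        have h1 : T.card ≤ S0.card := Finset.card_le_card hT'
        have h2 : S0.card ≤ S.card := Finset.card_le_card h
        have h3 : S.card - T.card = (S.card - S0.card) + (S0.card - T.card) := by omega
        rw [h3, pow_add]; ring
    _ = (1 - p) ^ (S.card - S0.card) := by rw [← Finset.mul_sum, base, mul_one]

lemma markov1 {ι : Type} (P : Finset ι) (w f : ι → ℝ) (e : ℝ)
    (hw : ∀ T ∈ P, 0 ≤ w T) (hf : ∀ T ∈ P, 0 ≤ f T)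
    (hE : ∑ T ∈ P, w T * f T ≤ e)
    [DecidablePred fun T => 3 * e < f T] :
    ∑ T ∈ P.filter (fun T => 3 * e < f T), w T < 1 / 3 := by
  by_contra hcon
  push_neg at hcon
  set B := P.filter (fun T => 3 * e < f T) with hB
  have hBP : B ⊆ P := Finset.filter_subset _ _
  have he0 : 0 ≤ e := le_trans (Finset.sum_nonneg fun T hT => mul_nonneg (hw T hT) (hf T hT)) hE
  have hex : ∃ T ∈ B, 0 < w T := by
    by_contra hn
    push_neg at hn
    have : ∑ T ∈ B, w T ≤ 0 := Finset.sum_nonpos fun T hT => hn T hT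
    linarith
  obtain ⟨T0, hT0B, hT0⟩ := hex
  have hlt : ∑ T ∈ B, w T * (3 * e) < ∑ T ∈ B, w T * f T := by
    refine Finset.sum_lt_sum (fun T hT => ?_) ⟨T0, hT0B, ?_⟩
    · exact mul_le_mul_of_nonneg_left (le_of_lt (Finset.mem_filter.1 hT).2) (hw T (hBP hT))
    · exact mul_lt_mul_of_pos_left (Finset.mem_filter.1 hT0B).2 hT0
  have h1 : ∑ T ∈ B, w T * (3 * e) = (∑ T ∈ B, w T) * (3 * e) := by
    rw [Finset.sum_mul]
  have hsub : ∑ T ∈ B, w T * f T ≤ e :=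
    le_trans (Finset.sum_le_sum_of_subset_of_nonneg hBP
      (fun T hT _ => mul_nonneg (hw T hT) (hf T hT))) hE
  rw [h1] at hlt
  nlinarith [hlt, hsub, hcon, he0]

lemma markov3 {ι : Type} [DecidableEq ι] (P : Finset ι) (w f1 f2 f3 : ι → ℝ) (e1 e2 e3 : ℝ)
    (hw : ∀ T ∈ P, 0 ≤ w T) (hw1 : ∑ T ∈ P, w T = 1)
    (hf1 : ∀ T ∈ P, 0 ≤ f1 T) (hf2 : ∀ T ∈ P, 0 ≤ f2 T) (hf3 : ∀ T ∈ P, 0 ≤ f3 T)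
    (hE1 : ∑ T ∈ P, w T * f1 T ≤ e1) (hE2 : ∑ T ∈ P, w T * f2 T ≤ e2)
    (hE3 : ∑ T ∈ P, w T * f3 T ≤ e3) :
    ∃ T ∈ P, f1 T ≤ 3 * e1 ∧ f2 T ≤ 3 * e2 ∧ f3 T ≤ 3 * e3 := by
  classical
  by_contra hcon
  push_neg at hcon
  have hM1 := markov1 P w f1 e1 hw hf1 hE1
  have hM2 := markov1 P w f2 e2 hw hf2 hE2
  have hM3 := markov1 P w f3 e3 hw hf3 hE3
  have key : ∑ T ∈ P, w T ≤
      (∑ T ∈ P.filter (fun T => 3 * e1 < f1 T), w T) +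
      ((∑ T ∈ P.filter (fun T => 3 * e2 < f2 T), w T) +
       (∑ T ∈ P.filter (fun T => 3 * e3 < f3 T), w T)) := by
    rw [Finset.sum_filter, Finset.sum_filter, Finset.sum_filter, ← Finset.sum_add_distrib,
      ← Finset.sum_add_distrib]
    refine Finset.sum_le_sum fun T hT => ?_
    have hwT := hw T hT
    rcases lt_or_ge (3 * e1) (f1 T) with h | h
    · have : (0:ℝ) ≤ (if 3 * e2 < f2 T then w T else 0) := by positivity
      have h3 : (0:ℝ) ≤ (if 3 * e3 < f3 T then w T else 0) := by positivity
      simp [h]; linarith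
    · rcases lt_or_ge (3 * e2) (f2 T) with h2 | h2
      · have h3 : (0:ℝ) ≤ (if 3 * e3 < f3 T then w T else 0) := by positivity
        have h1 : (0:ℝ) ≤ (if 3 * e1 < f1 T then w T else 0) := by positivity
        simp [h2]; linarith
      · have h3 : 3 * e3 < f3 T := hcon T hT h h2
        have h1 : (0:ℝ) ≤ (if 3 * e1 < f1 T then w T else 0) := by positivity
        have h2' : (0:ℝ) ≤ (if 3 * e2 < f2 T then w T else 0) := by positivity
        simp [h3]; linarith
  rw [hw1] at key
  linarith

/-- Existence of the random subset T₀ ⊆ N(A) with small size,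
few edges to X \ [A], and covering most of N(A)^φ. -/
theorem exists_T0 {V : Type} [Fintype V] [DecidableEq V]
    (G : SimpleGraph V) [DecidableRel G.Adj] (X Y : Finset V) (q s : ℕ)
    (hdisj : Disjoint X Y) (hunion : X ∪ Y = Finset.univ)
    (hbip : ∀ u v : V, G.Adj u v → (u ∈ X ∧ v ∈ Y) ∨ (u ∈ Y ∧ v ∈ X))
    (hdegX : ∀ x ∈ X, G.degree x = q) (hdegY : ∀ y ∈ Y, G.degree y = s)
    (A : Finset V) (hAX : A ⊆ X)
    (a g : ℕ) (ha : (closureOf G X A).card = a) (hg : (nbhd G A).card = g)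
    (t : ℝ) (ht : t = (g : ℝ) * s - (a : ℝ) * q)
    (φ : ℕ) (hφ1 : 1 ≤ φ) (hφ2 : φ ≤ s - 1)
    (C : ℝ) (hC : 0 < C)
    (p : ℝ) (hp : p = C * Real.log q / (φ * q)) (hp1 : p ≤ 1) :
    ∃ T₀ : Finset V, T₀ ⊆ nbhd G A ∧
      (T₀.card : ℝ) ≤ 3 * g * p ∧
      ((∑ y ∈ T₀, (G.neighborFinset y ∩ (X \ closureOf G X A)).card : ℕ) : ℝ) ≤
        3 * t * p ∧
      (((nbhdPhi G X A φ \
          nbhd G (nbhd G T₀ ∩ closureOf G X A)).card : ℕ) : ℝ) ≤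
        3 * g * Real.exp (-p * (mPhi G Y φ : ℝ)) := by
  classical
  set S := nbhd G A with hSdef
  set Acl := closureOf G X A with hAcldef
  -- basic positivity
  have hp0 : 0 ≤ p := by
    rw [hp]
    rcases Nat.eq_zero_or_pos q with h | h
    · simp [h]
    · exact div_nonneg (mul_nonneg hC.le (Real.log_nonneg (by exact_mod_cast h)))
        (by positivity)
  have h1p : 0 ≤ 1 - p := by linarith
  -- bipartite facts
  have hSY : S ⊆ Y := by
    intro y hy
    rw [hSdef, nbhd, Finset.mem_biUnion] at hy
    obtain ⟨v, hvA, hvy⟩ := hy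
    rw [SimpleGraph.mem_neighborFinset] at hvy
    rcases hbip v y hvy with ⟨_, h2⟩ | ⟨h1, _⟩
    · exact h2
    · exact absurd h1 (Finset.disjoint_left.1 hdisj (hAX hvA))
  have hNX : ∀ y ∈ Y, G.neighborFinset y ⊆ X := by
    intro y hy z hz
    rw [SimpleGraph.mem_neighborFinset] at hz
    rcases hbip y z hz with ⟨h1, _⟩ | ⟨_, h2⟩
    · exact absurd hy (Finset.disjoint_left.1 hdisj h1)
    · exact h2
  have hAclX : Acl ⊆ X := Finset.filter_subset _ _
  have hAclnb : ∀ x ∈ Acl, G.neighborFinset x ⊆ S := by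
    intro x hx
    exact (Finset.mem_filter.1 hx).2
  -- edge counting
  have hdegS : ∀ y ∈ S, (G.neighborFinset y).card = s := by
    intro y hy
    rw [SimpleGraph.card_neighborFinset_eq_degree]
    exact hdegY y (hSY hy)
  have hsplit : ∀ y ∈ S,
      (G.neighborFinset y ∩ Acl).card + (G.neighborFinset y ∩ (X \ Acl)).card = s := by
    intro y hy
    have h1 : G.neighborFinset y ∩ (X \ Acl) = G.neighborFinset y \ Acl := by
      ext z
      simp only [Finset.mem_inter, Finset.mem_sdiff]
      exact ⟨fun h => ⟨h.1, h.2.2⟩, fun h => ⟨h.1, hNX y (hSY hy) h.1, h.2⟩⟩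
    rw [h1, Finset.card_inter_add_card_sdiff, hdegS y hy]
  have hdouble : ∑ y ∈ S, (G.neighborFinset y ∩ Acl).card = a * q := by
    have step : ∀ y ∈ S, (G.neighborFinset y ∩ Acl).card
        = ∑ x ∈ Acl, if x ∈ G.neighborFinset y then 1 else 0 := by
      intro y _
      rw [Finset.sum_ite_mem, Finset.sum_const, smul_eq_mul, mul_one, Finset.inter_comm]
    rw [Finset.sum_congr rfl step, Finset.sum_comm]
    have step2 : ∀ x ∈ Acl, (∑ y ∈ S, if x ∈ G.neighborFinset y then 1 else 0) = q := by
      intro x hx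
      have hsym : ∀ y, (x ∈ G.neighborFinset y) ↔ (y ∈ G.neighborFinset x) := by
        intro y
        simp [SimpleGraph.mem_neighborFinset, SimpleGraph.adj_comm]
      rw [Finset.sum_congr rfl (fun y _ => by rw [if_congr (hsym y) rfl rfl]),
        Finset.sum_ite_mem, Finset.sum_const, smul_eq_mul, mul_one,
        Finset.inter_eq_right.2 (hAclnb x hx), SimpleGraph.card_neighborFinset_eq_degree]
      exact hdegX x (hAclX hx)
    rw [Finset.sum_congr rfl step2, Finset.sum_const, smul_eq_mul, ha]
  have hedges : a * q + ∑ y ∈ S, (G.neighborFinset y ∩ (X \ Acl)).card = g * s := by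
    rw [← hdouble, ← Finset.sum_add_distrib, Finset.sum_congr rfl hsplit,
      Finset.sum_const, smul_eq_mul, hg]
  have ht' : (∑ y ∈ S, ((G.neighborFinset y ∩ (X \ Acl)).card : ℝ)) = t := by
    have hc : ((a : ℝ) * q) + (∑ y ∈ S, ((G.neighborFinset y ∩ (X \ Acl)).card : ℝ))
        = (g : ℝ) * s := by exact_mod_cast hedges
    linarith [ht, hc]
  -- m_φ facts
  set M := (mPhi G Y φ : ℝ) with hM
  have hm : ∀ y ∈ nbhdPhi G X A φ,
      mPhi G Y φ ≤ (nbhd G (G.neighborFinset y ∩ Acl)).card := by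
    intro y hy
    have hy1 := (Finset.mem_filter.1 hy).1
    exact Nat.sInf_le ⟨y, hSY hy1, G.neighborFinset y ∩ Acl,
      Finset.inter_subset_left, (Finset.mem_filter.1 hy).2, rfl⟩
  have hRS : ∀ y : V, nbhd G (G.neighborFinset y ∩ Acl) ⊆ S := by
    intro y z hz
    rw [nbhd, Finset.mem_biUnion] at hz
    obtain ⟨x, hx, hzx⟩ := hz
    exact hAclnb x (Finset.mem_inter.1 hx).2 hzx
  have hcov : ∀ (T : Finset V), ∀ y ∈ nbhdPhi G X A φ,
      ¬ Disjoint T (nbhd G (G.neighborFinset y ∩ Acl)) →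
      y ∈ nbhd G (nbhd G T ∩ Acl) := by
    intro T y _ hnd
    obtain ⟨z, hzT, hzR⟩ := Finset.not_disjoint_iff.1 hnd
    rw [nbhd, Finset.mem_biUnion] at hzR
    obtain ⟨x, hx, hzx⟩ := hzR
    obtain ⟨hxNy, hxAcl⟩ := Finset.mem_inter.1 hx
    rw [nbhd, Finset.mem_biUnion]
    refine ⟨x, Finset.mem_inter.2 ⟨?_, hxAcl⟩, ?_⟩
    · rw [nbhd, Finset.mem_biUnion]
      exact ⟨z, hzT, by
        rw [SimpleGraph.mem_neighborFinset] at hzx ⊢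
        exact hzx.symm⟩
    · rw [SimpleGraph.mem_neighborFinset] at hxNy ⊢
      exact hxNy.symm
  -- weights
  set P := S.powerset with hPdef
  set w : Finset V → ℝ := fun T => p ^ T.card * (1 - p) ^ (S.card - T.card) with hwdef
  have hwnn : ∀ T, 0 ≤ w T := fun T => mul_nonneg (pow_nonneg hp0 _) (pow_nonneg h1p _)
  have hw1 : ∑ T ∈ P, w T = 1 := by
    have := key_sum p S S (Finset.Subset.refl S)
    simpa using this
  have hfil : ∀ y ∈ S, ∑ T ∈ P.filter (fun T => y ∈ T), w T = p := by
    intro y hy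
    have hsplit2 := Finset.sum_filter_add_sum_filter_not P (fun T => y ∈ T) w
    have hnot : P.filter (fun T => ¬ y ∈ T) = (S.erase y).powerset := by
      ext T
      simp only [Finset.mem_filter, Finset.mem_powerset, Finset.subset_erase, hPdef] <;> tauto
    have hkey := key_sum p S (S.erase y) (Finset.erase_subset _ _)
    rw [Finset.card_erase_of_mem hy] at hkey
    have hScard : 1 ≤ S.card := Finset.card_pos.2 ⟨y, hy⟩
    have hexp : S.card - (S.card - 1) = 1 := by omega
    rw [hexp, pow_one] at hkey
    rw [hnot, hkey, hw1] at hsplit2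
    linarith
  have L2 : ∀ c : V → ℝ, ∑ T ∈ P, w T * ∑ y ∈ T, c y = p * ∑ y ∈ S, c y := by
    intro c
    have step1 : ∀ T ∈ P, w T * ∑ y ∈ T, c y
        = ∑ y ∈ S, (if y ∈ T then w T * c y else 0) := by
      intro T hT
      rw [Finset.sum_ite_mem, Finset.inter_eq_right.2 (Finset.mem_powerset.1 hT),
        Finset.mul_sum]
    rw [Finset.sum_congr rfl step1, Finset.sum_comm, Finset.mul_sum]
    refine Finset.sum_congr rfl fun y hy => ?_
    rw [← Finset.sum_filter, ← Finset.sum_mul, hfil y hy]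
  -- the three expectations
  have hE1 : ∑ T ∈ P, w T * (T.card : ℝ) ≤ p * g := by
    refine le_of_eq ?_
    calc ∑ T ∈ P, w T * (T.card : ℝ) = ∑ T ∈ P, w T * ∑ _y ∈ T, (1:ℝ) := by
          refine Finset.sum_congr rfl fun T _ => by simp
      _ = p * ∑ _y ∈ S, (1:ℝ) := L2 _
      _ = p * g := by simp [hg]
  have hE2 : ∑ T ∈ P, w T * (∑ y ∈ T, ((G.neighborFinset y ∩ (X \ Acl)).card : ℝ))
      ≤ p * t := le_of_eq (by rw [L2, ht'])
  have hE3 : ∑ T ∈ P, w T *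
      (((nbhdPhi G X A φ \ nbhd G (nbhd G T ∩ Acl)).card : ℕ) : ℝ)
      ≤ g * Real.exp (-p * M) := by
    have hb : ∀ T ∈ P, w T * (((nbhdPhi G X A φ \ nbhd G (nbhd G T ∩ Acl)).card : ℕ) : ℝ)
        ≤ w T * ∑ y ∈ nbhdPhi G X A φ,
            (if Disjoint T (nbhd G (G.neighborFinset y ∩ Acl)) then (1:ℝ) else 0) := by
      intro T _
      refine mul_le_mul_of_nonneg_left ?_ (hwnn T)
      have hsub : nbhdPhi G X A φ \ nbhd G (nbhd G T ∩ Acl) ⊆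
          (nbhdPhi G X A φ).filter
            (fun y => Disjoint T (nbhd G (G.neighborFinset y ∩ Acl))) := by
        intro y hy
        rw [Finset.mem_sdiff] at hy
        rw [Finset.mem_filter]
        refine ⟨hy.1, ?_⟩
        by_contra h
        exact hy.2 (hcov T y hy.1 h)
      calc (((nbhdPhi G X A φ \ nbhd G (nbhd G T ∩ Acl)).card : ℕ) : ℝ)
          ≤ (((nbhdPhi G X A φ).filter
              (fun y => Disjoint T (nbhd G (G.neighborFinset y ∩ Acl)))).card : ℝ) := by
            exact_mod_cast Finset.card_le_card hsub
        _ = ∑ y ∈ nbhdPhi G X A φ,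
            (if Disjoint T (nbhd G (G.neighborFinset y ∩ Acl)) then (1:ℝ) else 0) := by
            rw [Finset.card_filter]
            push_cast
            rfl
    calc ∑ T ∈ P, w T * (((nbhdPhi G X A φ \ nbhd G (nbhd G T ∩ Acl)).card : ℕ) : ℝ)
        ≤ ∑ T ∈ P, w T * ∑ y ∈ nbhdPhi G X A φ,
            (if Disjoint T (nbhd G (G.neighborFinset y ∩ Acl)) then (1:ℝ) else 0) :=
          Finset.sum_le_sum hb
      _ = ∑ T ∈ P, ∑ y ∈ nbhdPhi G X A φ,
            (if Disjoint T (nbhd G (G.neighborFinset y ∩ Acl)) then w T else 0) := by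
          refine Finset.sum_congr rfl fun T _ => ?_
          rw [Finset.mul_sum]
          refine Finset.sum_congr rfl fun y _ => ?_
          simp
      _ = ∑ y ∈ nbhdPhi G X A φ, ∑ T ∈ P,
            (if Disjoint T (nbhd G (G.neighborFinset y ∩ Acl)) then w T else 0) :=
          Finset.sum_comm
      _ = ∑ y ∈ nbhdPhi G X A φ,
            (1 - p) ^ (nbhd G (G.neighborFinset y ∩ Acl)).card := by
          refine Finset.sum_congr rfl fun y _ => ?_
          rw [← Finset.sum_filter]
          have hfeq : P.filter (fun T => Disjoint T (nbhd G (G.neighborFinset y ∩ Acl)))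
              = (S \ nbhd G (G.neighborFinset y ∩ Acl)).powerset := by
            ext T
            simp only [Finset.mem_filter, Finset.mem_powerset, Finset.subset_sdiff, hPdef] <;> tauto
          have hkey := key_sum p S (S \ nbhd G (G.neighborFinset y ∩ Acl))
            Finset.sdiff_subset
          have hle : (nbhd G (G.neighborFinset y ∩ Acl)).card ≤ S.card :=
            Finset.card_le_card (hRS y)
          rw [Finset.card_sdiff_of_subset (hRS y), Nat.sub_sub_self hle] at hkey
          rw [hfeq]
          exact hkey
      _ ≤ ∑ _y ∈ nbhdPhi G X A φ, Real.exp (-p * M) := by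
          refine Finset.sum_le_sum fun y hy => ?_
          have hk : (M : ℝ) ≤ ((nbhd G (G.neighborFinset y ∩ Acl)).card : ℝ) := by
            rw [hM]
            exact_mod_cast hm y hy
          calc (1 - p) ^ (nbhd G (G.neighborFinset y ∩ Acl)).card
              ≤ Real.exp (-p) ^ (nbhd G (G.neighborFinset y ∩ Acl)).card := by
                refine pow_le_pow_left₀ h1p ?_ _
                nlinarith [Real.add_one_le_exp (-p)]
            _ = Real.exp (((nbhd G (G.neighborFinset y ∩ Acl)).card : ℝ) * (-p)) := by
                rw [Real.exp_nat_mul]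
            _ ≤ Real.exp (-p * M) := by
                apply Real.exp_le_exp.2
                nlinarith [mul_le_mul_of_nonneg_left hk hp0]
      _ = ((nbhdPhi G X A φ).card : ℝ) * Real.exp (-p * M) := by
          rw [Finset.sum_const, nsmul_eq_mul]
      _ ≤ g * Real.exp (-p * M) := by
          have hcard : (nbhdPhi G X A φ).card ≤ g := by
            rw [← hg]
            exact Finset.card_le_card (Finset.filter_subset _ _)
          exact mul_le_mul_of_nonneg_right (by exact_mod_cast hcard) (Real.exp_pos _).le
  -- apply the union bound
  obtain ⟨T, hTP, h1, h2, h3⟩ := markov3 P w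
    (fun T => (T.card : ℝ))
    (fun T => ∑ y ∈ T, ((G.neighborFinset y ∩ (X \ Acl)).card : ℝ))
    (fun T => (((nbhdPhi G X A φ \ nbhd G (nbhd G T ∩ Acl)).card : ℕ) : ℝ))
    (p * g) (p * t) (g * Real.exp (-p * M))
    (fun T _ => hwnn T) hw1
    (fun T _ => by positivity)
    (fun T _ => Finset.sum_nonneg fun y _ => by positivity)
    (fun T _ => by positivity)
    hE1 hE2 hE3
  refine ⟨T, Finset.mem_powerset.1 hTP, ?_, ?_, ?_⟩
  · have : 3 * (p * (g : ℝ)) = 3 * g * p := by ring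
    linarith [h1]
  · have hcast : ((∑ y ∈ T, (G.neighborFinset y ∩ (X \ Acl)).card : ℕ) : ℝ)
        = ∑ y ∈ T, ((G.neighborFinset y ∩ (X \ Acl)).card : ℝ) := by push_cast; rfl
    have : 3 * (p * t) = 3 * t * p := by ring
    rw [hcast]
    linarith [h2]
  · have : 3 * ((g : ℝ) * Real.exp (-p * M)) = 3 * g * Real.exp (-p * M) := by ring
    linarith [h3]
end

section
/- There exists K such that the following holds for all k ≥ K. Let 100·ln k ≤ r ≤ 2+2√(k·ln k), n = 2k+r, and d = \binom{k+r-1}{k-1}. Let a, g be integers with 1 ≤ a ≤ \binom{2k+⌊3r/4⌋}{k+r-1} and d ≤ g ≤ d³, and let G(a,g) := { A ⊆ L_{k+r−1} : A is 2-linked, |[A]| = a, |N(A)| = g }. Then |G(a,g)| ≤ 2^{g/2}. -/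
open Finset

/-- The bipartite graph `H` on subsets of `Fin m`: two sets are adjacent iff one
has size k-1, the other size k+r-1, and one contains the other. -/
def Hgraph (m k r : ℕ) : SimpleGraph (Finset (Fin m)) where
  Adj A B := A ≠ B ∧ ((A.card = k - 1 ∧ B.card = k + r - 1 ∧ A ⊆ B) ∨
    (B.card = k - 1 ∧ A.card = k + r - 1 ∧ B ⊆ A))
  symm := ⟨fun _ _ h => ⟨h.1.symm, h.2.symm⟩⟩
  loopless := ⟨fun _ h => h.1 rfl⟩

/-- The neighborhood in `H` of a family `A ⊆ L_{k+r-1}`: its (k-1)-shadow. -/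
def nbhdH (m k : ℕ) (A : Finset (Finset (Fin m))) : Finset (Finset (Fin m)) :=
  A.biUnion fun S => Finset.powersetCard (k - 1) S

/-- The closure `[A] = {v ∈ L_{k+r-1} : N(v) ⊆ N(A)}` of `A ⊆ L_{k+r-1}`. -/
def closureH (m k r : ℕ) (A : Finset (Finset (Fin m))) : Finset (Finset (Fin m)) :=
  Finset.univ.filter fun v : Finset (Fin m) =>
    v.card = k + r - 1 ∧ Finset.powersetCard (k - 1) v ⊆ nbhdH m k A

/-!
By Kruskal–Katona, a family `A` of `(k+r-1)`-sets whose `(k-1)`-shadow has `g ≤ d³` members is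
tiny. If `C(x, k+r-1) ≤ |A| < C(x+1, k+r-1)`, then `g ≥ C(x, k-1)`; the bound `g ≤ d³ < q^(11r)`
keeps `x` below `k + 11r - 1`, so each of the `r` steps from `C(x, k+r-1)` to `C(x, k-1)` along
row `x` gains a factor `q ≈ k/(11r)`, whence `|A| q^r ≤ 2kg`. Since `q^r ≥ 2^r ≥ k³`, such a
family has at most `g/(2n)` members, and there are at most `2^(n · g/(2n))` families that small.
-/

open scoped FinsetFamily

theorem nbhdH_eq_shadow_iterate {m k r : ℕ} (hk : 1 ≤ k) {A : Finset (Finset (Fin m))}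
    (hA : (A : Set (Finset (Fin m))).Sized (k + r - 1)) : nbhdH m k A = ∂^[r] A := by
  ext T
  simp only [nbhdH, mem_biUnion, mem_powersetCard, mem_shadow_iterate_iff_exists_mem_card_add]
  refine exists_congr fun S => and_congr_right fun hS => and_congr_right fun _ => ?_
  rw [hA hS]
  omega

theorem choose_le_card_nbhdH {m k r x : ℕ} (hk : 1 ≤ k) {A : Finset (Finset (Fin m))}
    (hA : (A : Set (Finset (Fin m))).Sized (k + r - 1)) (hx : k + r - 1 ≤ x) (hxm : x ≤ m)
    (hAx : x.choose (k + r - 1) ≤ #A) : x.choose (k - 1) ≤ #(nbhdH m k A) := by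
  have h := kruskal_katona_lovasz_form (i := r) (by omega) hx hxm hA hAx
  rwa [show k + r - 1 - r = k - 1 by omega, ← nbhdH_eq_shadow_iterate hk hA] at h

theorem pow_mul_choose_le_choose_add {b n j c : ℕ} (h : b * (j + c) + (j + c) ≤ n + 1) :
    b ^ c * n.choose j ≤ n.choose (j + c) := by
  induction c with
  | zero => simp
  | succ c ih =>
    have hstep : b * (j + c + 1) ≤ n - (j + c) := by
      rw [show j + (c + 1) = j + c + 1 by ring] at h; omega
    have hnext : b * n.choose (j + c) ≤ n.choose (j + c + 1) := by
      refine Nat.le_of_mul_le_mul_right ?_ (Nat.succ_pos (j + c))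
      rw [Nat.choose_succ_right_eq, mul_right_comm, mul_comm _ (n - (j + c))]
      exact Nat.mul_le_mul_right _ hstep
    calc b ^ (c + 1) * n.choose j = b * (b ^ c * n.choose j) := by ring
      _ ≤ b * n.choose (j + c) := Nat.mul_le_mul_left _ (ih (by nlinarith))
      _ ≤ n.choose (j + (c + 1)) := hnext

theorem choose_succ_le_succ_mul_choose {x s : ℕ} (h : s ≤ x) :
    (x + 1).choose s ≤ (s + 1) * x.choose s := by
  refine Nat.le_of_mul_le_mul_right (c := x + 1 - s) ?_ (by omega)
  rw [← Nat.choose_mul_succ_eq, mul_comm (x.choose s), mul_right_comm (s + 1)]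
  refine Nat.mul_le_mul_right _ ?_
  have : s ≤ s * (x + 1 - s) := Nat.le_mul_of_pos_right s (by omega)
  rw [add_mul, one_mul]
  omega

theorem exists_choose_le_lt_choose_succ {s t y : ℕ} (ht : 1 ≤ t) (hy : t < y.choose s) :
    ∃ x, s ≤ x ∧ x < y ∧ x.choose s ≤ t ∧ t < (x + 1).choose s := by
  have choose_le_one : ∀ {x}, x ≤ s → x.choose s ≤ 1 := fun hx => by
    rcases hx.lt_or_eq with hx | rfl
    · simp [Nat.choose_eq_zero_of_lt hx]
    · simp
  have hy0 : y ≠ 0 := by rintro rfl; exact absurd (choose_le_one (Nat.zero_le s)) (by omega)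
  have hP : ∃ x, t < (x + 1).choose s := ⟨y - 1, by rwa [Nat.sub_add_cancel (by omega)]⟩
  classical
  refine ⟨Nat.find hP, ?_, ?_, ?_, Nat.find_spec hP⟩
  · by_contra! hxs
    exact absurd (choose_le_one (x := Nat.find hP + 1) hxs) (by have := Nat.find_spec hP; omega)
  · have := Nat.find_min' hP
      (show t < (y - 1 + 1).choose s by rwa [Nat.sub_add_cancel (by omega)])
    omega
  · obtain ⟨x, hx⟩ | hx : (∃ x, Nat.find hP = x + 1) ∨ Nat.find hP = 0 := by
      cases Nat.find hP <;> simp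
    · rw [hx]
      exact not_lt.1 (Nat.find_min hP (hx ▸ Nat.lt_succ_self x))
    · rw [hx]
      exact (choose_le_one (Nat.zero_le s)).trans ht

theorem card_mul_pow_le_of_card_nbhdH_lt {m k r q : ℕ} {A : Finset (Finset (Fin m))}
    (hm : k + 11 * r ≤ m + 1) (hq : 11 * r * q + r + 1 ≤ k)
    (hA : (A : Set (Finset (Fin m))).Sized (k + r - 1)) (hN : #(nbhdH m k A) < q ^ (11 * r)) :
    #A * q ^ r ≤ 2 * k * #(nbhdH m k A) := by
  rcases A.eq_empty_or_nonempty with rfl | hA₀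
  · simp
  have hk : 1 ≤ k := by omega
  have hqc : ∀ c ≤ 11 * r, q * c ≤ 11 * r * q := fun c hc => by
    rw [mul_comm (11 * r)]; exact Nat.mul_le_mul_left q hc
  have hsmall : #A < (k + r - 1 + 10 * r).choose (k + r - 1) := by
    by_contra! hbig
    have hKK := choose_le_card_nbhdH hk hA (by omega) (by omega) hbig
    have hclimb := pow_mul_choose_le_choose_add (b := q) (n := k - 1 + 11 * r) (j := 0)
      (c := 11 * r) (by rw [zero_add]; have := hqc (11 * r) le_rfl; omega)
    rw [Nat.choose_zero_right, mul_one, zero_add, ← Nat.choose_symm_add,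
      show k - 1 + 11 * r = k + r - 1 + 10 * r by omega] at hclimb
    omega
  obtain ⟨x, hsx, hx, hAx, hAx'⟩ := exists_choose_le_lt_choose_succ (card_pos.2 hA₀) hsmall
  have hKK := choose_le_card_nbhdH hk hA hsx (by omega) hAx
  have hclimb := pow_mul_choose_le_choose_add (b := q) (n := x) (j := x - (k + r - 1)) (c := r)
    (by have := hqc (x - (k + r - 1) + r) (by omega); omega)
  rw [Nat.choose_symm hsx, show x - (k + r - 1) + r = x - (k - 1) by omega,
    Nat.choose_symm (by omega)] at hclimb
  calc #A * q ^ r ≤ (x + 1).choose (k + r - 1) * q ^ r :=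
        Nat.mul_le_mul_right _ hAx'.le
    _ ≤ (k + r - 1 + 1) * x.choose (k + r - 1) * q ^ r :=
        Nat.mul_le_mul_right _ (choose_succ_le_succ_mul_choose hsx)
    _ = (k + r) * (q ^ r * x.choose (k + r - 1)) := by
        rw [Nat.sub_add_cancel (by omega)]; ring
    _ ≤ (k + r) * #(nbhdH m k A) := Nat.mul_le_mul_left _ (hclimb.trans hKK)
    _ ≤ 2 * k * #(nbhdH m k A) := Nat.mul_le_mul_right _ (by omega)

theorem choose_pow_three_lt_pow {k r q : ℕ} (hk : 1 ≤ k) (hr : 1 ≤ r) (hrk : r ≤ k + 1)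
    (hq : (2 * k) ^ 3 < q ^ 11) : ((k + r - 1).choose (k - 1)) ^ 3 < q ^ (11 * r) := by
  have hd : (k + r - 1).choose (k - 1) ≤ (2 * k) ^ r := by
    rw [show k + r - 1 = k - 1 + r by omega, Nat.choose_symm_add]
    exact (Nat.choose_le_pow _ _).trans (Nat.pow_le_pow_left (by omega) r)
  calc ((k + r - 1).choose (k - 1)) ^ 3 ≤ ((2 * k) ^ r) ^ 3 := Nat.pow_le_pow_left hd 3
    _ = ((2 * k) ^ 3) ^ r := by rw [← pow_mul, ← pow_mul, mul_comm r 3]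
    _ < (q ^ 11) ^ r := Nat.pow_lt_pow_left hq (by omega)
    _ = q ^ (11 * r) := by rw [← pow_mul]

theorem card_filter_card_le_le_pow {α : Type*} [Fintype α] [DecidableEq α] (M : ℕ) :
    #{A : Finset α | #A ≤ M} ≤ (Fintype.card α + 1) ^ M := by
  induction M with
  | zero => simp [card_le_one]
  | succ M ih =>
    have hcover : (univ.filter fun A : Finset α => #A ≤ M + 1) ⊆
        (univ ×ˢ univ.filter fun A : Finset α => #A ≤ M).image
          fun p : Option α × Finset α => p.1.elim p.2 (insert · p.2) := by
      intro A hA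
      simp only [mem_image, mem_product, mem_filter, mem_univ, true_and, Prod.exists]
      rcases A.eq_empty_or_nonempty with rfl | ⟨a, ha⟩
      · exact ⟨none, ∅, by simp, rfl⟩
      · refine ⟨some a, A.erase a, ?_, insert_erase ha⟩
        rw [card_erase_of_mem ha]
        simp only [mem_filter, mem_univ, true_and] at hA
        omega
    calc #{A : Finset α | #A ≤ M + 1}
        ≤ #(univ ×ˢ univ.filter fun A : Finset α => #A ≤ M) :=
          (card_le_card hcover).trans card_image_le
      _ ≤ (Fintype.card α + 1) * (Fintype.card α + 1) ^ M := by
        rw [card_product, card_univ, Fintype.card_option]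
        exact Nat.mul_le_mul_left _ ih
      _ = (Fintype.card α + 1) ^ (M + 1) := by ring

theorem natCard_le_pow_of_forall_card_le {α : Type*} [Fintype α] {P : Finset α → Prop} {M : ℕ}
    (h : ∀ A, P A → #A ≤ M) : Nat.card {A // P A} ≤ (Fintype.card α + 1) ^ M := by
  classical
  rw [Nat.card_eq_fintype_card, Fintype.card_subtype]
  exact (card_le_card (monotone_filter_right _ fun A _ hA => h A hA)).trans
    (card_filter_card_le_le_pow M)

theorem natCard_le_two_rpow {m M g : ℕ} {P : Finset (Finset (Fin m)) → Prop}
    (hP : ∀ A, P A → #A ≤ M) (hM : 2 * (m + 1) * M ≤ g) :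
    (Nat.card {A // P A} : ℝ) ≤ 2 ^ ((g : ℝ) / 2) := by
  have hcount := natCard_le_pow_of_forall_card_le hP
  rw [Fintype.card_finset, Fintype.card_fin] at hcount
  have hbase : 2 ^ m + 1 ≤ 2 ^ (m + 1) := by
    rw [pow_succ]; have := Nat.one_le_two_pow (n := m); omega
  have : Nat.card {A // P A} ≤ 2 ^ ((m + 1) * M) :=
    calc Nat.card {A // P A} ≤ (2 ^ m + 1) ^ M := hcount
      _ ≤ (2 ^ (m + 1)) ^ M := Nat.pow_le_pow_left hbase M
      _ = 2 ^ ((m + 1) * M) := by rw [← pow_mul]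
  calc (Nat.card {A // P A} : ℝ) ≤ (2 : ℝ) ^ ((m + 1) * M) := by exact_mod_cast this
    _ = (2 : ℝ) ^ (((m + 1) * M : ℕ) : ℝ) := (Real.rpow_natCast 2 _).symm
    _ ≤ 2 ^ ((g : ℝ) / 2) := by
      refine Real.rpow_le_rpow_of_exponent_le one_le_two ?_
      rw [le_div_iff₀ two_pos]
      exact_mod_cast (show (m + 1) * M * 2 ≤ g by linarith)

theorem pow_three_le_two_pow {k r : ℕ} (h : 100 * Real.log k ≤ r) : k ^ 3 ≤ 2 ^ r := by
  rcases Nat.eq_zero_or_pos k with rfl | hk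
  · simp
  have hlog : 0 ≤ Real.log k := Real.log_nonneg (by exact_mod_cast hk)
  have : ((k ^ 3 : ℕ) : ℝ) ≤ ((2 ^ r : ℕ) : ℝ) := by
    push_cast
    rw [← Real.log_le_log_iff (by positivity) (by positivity), Real.log_pow, Real.log_pow]
    push_cast
    nlinarith [Real.log_two_gt_d9, mul_nonneg (sub_nonneg.2 h) (Real.log_pos one_lt_two).le]
  exact_mod_cast this

-- The left side is `(8 · 22¹¹ · r¹¹)²`; against `q ≥ k / (22 r)` this yields `q¹¹ > 8 k³`.
theorem pow_lt_pow_of_le_sqrt_mul_log {k r : ℕ} (hk : 10 ^ 16 ≤ k)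
    (h : (r : ℝ) ≤ 2 + 2 * √(k * Real.log k)) : 64 * 22 ^ 22 * r ^ 22 < k ^ 16 := by
  have hk0 : (0 : ℝ) ≤ k := k.cast_nonneg
  set v : ℝ := (k : ℝ) ^ ((1 : ℝ) / 8) with hv_def
  have hv8 : v ^ 8 = k := by rw [← Real.rpow_mul_natCast hk0]; norm_num
  have hv : 100 ≤ v := by
    refine le_of_pow_le_pow_left₀ (n := 8) (by norm_num) (by positivity) ?_
    rw [hv8]; exact_mod_cast (show 100 ^ 8 ≤ k by omega)
  have hlog : Real.log k ≤ 8 * v := by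
    have := Real.log_le_rpow_div hk0 (ε := 1 / 8) (by norm_num)
    rw [← hv_def] at this; linarith
  have hlog0 : 0 ≤ Real.log k := Real.log_nonneg (by exact_mod_cast (show 1 ≤ k by omega))
  have hs := Real.sq_sqrt (mul_nonneg hk0 hlog0)
  have hs0 := Real.sqrt_nonneg (k * Real.log k)
  have hkl : k * Real.log k ≤ 8 * v ^ 9 :=
    calc k * Real.log k ≤ k * (8 * v) := mul_le_mul_of_nonneg_left hlog hk0
      _ = 8 * v ^ 9 := by rw [← hv8]; ring
  have hv9 : 1 ≤ v ^ 9 := one_le_pow₀ (by linarith)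
  have hr2 : (r : ℝ) ^ 2 ≤ 72 * v ^ 9 := by
    nlinarith [sq_nonneg (√(k * Real.log k) - 1), (r.cast_nonneg : (0 : ℝ) ≤ r)]
  have hr22 : (r : ℝ) ^ 22 ≤ 72 ^ 11 * v ^ 99 := by
    calc (r : ℝ) ^ 22 = ((r : ℝ) ^ 2) ^ 11 := by ring
      _ ≤ (72 * v ^ 9) ^ 11 := pow_le_pow_left₀ (by positivity) hr2 11
      _ = 72 ^ 11 * v ^ 99 := by ring
  have hv29 : (64 * 22 ^ 22 * 72 ^ 11 : ℝ) < v ^ 29 :=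
    lt_of_lt_of_le (by norm_num) (pow_le_pow_left₀ (by norm_num) hv 29)
  have : 64 * 22 ^ 22 * (r : ℝ) ^ 22 < (k : ℝ) ^ 16 :=
    calc 64 * 22 ^ 22 * (r : ℝ) ^ 22 ≤ 64 * 22 ^ 22 * 72 ^ 11 * v ^ 99 := by nlinarith
      _ < v ^ 29 * v ^ 99 := by gcongr
      _ = (k : ℝ) ^ 16 := by rw [← hv8]; ring
  exact_mod_cast this

theorem twentysix_mul_le_of_pow_lt {k r : ℕ} (h : 64 * 22 ^ 22 * r ^ 22 < k ^ 16) :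
    26 * r ≤ k := by
  by_contra! hk
  have h16 : r ^ 16 ≤ r ^ 22 := by
    rcases Nat.eq_zero_or_pos r with rfl | hr
    · simp
    · exact Nat.pow_le_pow_right hr (by norm_num)
  have : k ^ 16 ≤ 64 * 22 ^ 22 * r ^ 22 :=
    calc k ^ 16 ≤ (26 * r) ^ 16 := Nat.pow_le_pow_left hk.le 16
      _ = 26 ^ 16 * r ^ 16 := mul_pow _ _ _
      _ ≤ 64 * 22 ^ 22 * r ^ 22 := Nat.mul_le_mul (by norm_num) h16
  omega

theorem two_mul_pow_three_lt_pow_eleven {k r : ℕ} (hr : 1 ≤ r)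
    (h : 64 * 22 ^ 22 * r ^ 22 < k ^ 16) : (2 * k) ^ 3 < ((k - 1 - r) / (11 * r)) ^ 11 := by
  have h26 := twentysix_mul_le_of_pow_lt h
  have hdiv := Nat.lt_mul_div_succ (k - 1 - r) (show 0 < 11 * r by omega)
  set q := (k - 1 - r) / (11 * r)
  have hkq : k ≤ 22 * r * q := by
    rw [mul_add, mul_one] at hdiv
    have : 22 * r * q = 2 * (11 * r * q) := by ring
    omega
  have h8 : 8 * 22 ^ 11 * r ^ 11 < k ^ 8 := by
    rw [← Nat.pow_lt_pow_iff_left (n := 2) two_ne_zero]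
    convert h using 1 <;> ring
  have : (2 * k) ^ 3 * (22 * r) ^ 11 < q ^ 11 * (22 * r) ^ 11 :=
    calc (2 * k) ^ 3 * (22 * r) ^ 11 = k ^ 3 * (8 * 22 ^ 11 * r ^ 11) := by ring
      _ < k ^ 3 * k ^ 8 := Nat.mul_lt_mul_of_pos_left h8 (pow_pos (by omega) 3)
      _ = k ^ 11 := by ring
      _ ≤ (22 * r * q) ^ 11 := Nat.pow_le_pow_left hkq 11
      _ = q ^ 11 * (22 * r) ^ 11 := by ring
  exact Nat.lt_of_mul_lt_mul_right this

theorem exists_climbing_ratio {k r : ℕ} (hk : 10 ^ 16 ≤ k) (hlo : 100 * Real.log k ≤ r)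
    (hhi : (r : ℝ) ≤ 2 + 2 * √(k * Real.log k)) :
    1 ≤ r ∧ 26 * r ≤ k ∧ ∃ q, 11 * r * q + r + 1 ≤ k ∧ (2 * k) ^ 3 < q ^ 11 ∧
      4 * (2 * k + r) * k ≤ q ^ r := by
  have h16 := pow_lt_pow_of_le_sqrt_mul_log hk hhi
  have h26 := twentysix_mul_le_of_pow_lt h16
  have hk3 := pow_three_le_two_pow hlo
  have hkk3 : k ≤ k ^ 3 := Nat.le_self_pow (by norm_num) k
  have hr : 1 ≤ r := by
    by_contra! h0
    rw [Nat.lt_one_iff.1 h0, pow_zero] at hk3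
    omega
  have hq11 := two_mul_pow_three_lt_pow_eleven hr h16
  have hdiv := Nat.mul_div_le (k - 1 - r) (11 * r)
  set q := (k - 1 - r) / (11 * r)
  have hq2 : 2 ≤ q := by
    by_contra! hq
    have : q ^ 11 ≤ 1 := pow_le_one₀ (Nat.zero_le q) (by omega)
    have : 1 ≤ (2 * k) ^ 3 := Nat.one_le_pow _ _ (by omega)
    omega
  refine ⟨hr, h26, q, ?_, hq11, ?_⟩
  · omega
  · calc 4 * (2 * k + r) * k ≤ k * k * k := by nlinarith
      _ = k ^ 3 := by ring
      _ ≤ 2 ^ r := hk3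
      _ ≤ q ^ r := Nat.pow_le_pow_left hq2 r

/-- the small case: for d ≤ g ≤ d³ the number of 2-linked families
A ⊆ L_{k+r-1} with |[A]| = a and |N(A)| = g is at most 2^(g/2). -/
theorem count_two_linked_small_case : ∃ K : ℕ, ∀ k : ℕ, K ≤ k → ∀ r n d a g : ℕ,
    (100 * Real.log k ≤ (r : ℝ)) → ((r : ℝ) ≤ 2 + 2 * Real.sqrt (k * Real.log k)) →
    n = 2 * k + r → d = (k + r - 1).choose (k - 1) →
    1 ≤ a → a ≤ (2 * k + 3 * r / 4).choose (k + r - 1) →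
    d ≤ g → g ≤ d ^ 3 →
    (Nat.card {A : Finset (Finset (Fin (n - 1))) //
        (∀ S ∈ A, S.card = k + r - 1) ∧ MLinked (Hgraph (n - 1) k r) 2 A ∧
        (closureH (n - 1) k r A).card = a ∧ (nbhdH (n - 1) k A).card = g} : ℝ) ≤
      (2 : ℝ) ^ ((g : ℝ) / 2) := by
  refine ⟨10 ^ 16, fun k hk r n d a g hlo hhi hn hd _ _ _ hg => ?_⟩
  subst hn hd
  obtain ⟨hr, h26, q, hq, hq11, hqr⟩ := exists_climbing_ratio hk hlo hhi
  have hqr0 : 0 < q ^ r := lt_of_lt_of_le (by positivity) hqr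
  refine natCard_le_two_rpow (M := 2 * k * g / q ^ r) ?_ ?_
  · rintro A ⟨hA, -, -, rfl⟩
    rw [Nat.le_div_iff_mul_le hqr0]
    exact card_mul_pow_le_of_card_nbhdH_lt (by omega) hq hA
      (hg.trans_lt (choose_pow_three_lt_pow (by omega) hr (by omega) hq11))
  · refine Nat.le_of_mul_le_mul_right ?_ hqr0
    calc 2 * (2 * k + r - 1 + 1) * (2 * k * g / q ^ r) * q ^ r
        ≤ 2 * (2 * k + r) * (2 * k * g) := by
          rw [Nat.sub_add_cancel (by omega), mul_assoc]
          exact Nat.mul_le_mul_left _ (Nat.div_mul_le_self _ _)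
      _ = 4 * (2 * k + r) * k * g := by ring
      _ ≤ g * q ^ r := by rw [mul_comm g]; exact Nat.mul_le_mul_right g hqr
end
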